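/- arXiv:2311.02671 — 7 statements merged into one kernel-verified Lean document; each statement's English description precedes it below -/
import Mathlib

section
/- Let Φ : ℝⁿ → (-∞,∞] be a proper lower semicontinuous convex function, written as Φ(y) = sup over (α,b) in a nonempty set S ⊂ ℝ × ℝⁿ of (α + b·y). Let ψ : [0,∞) → [0,∞) satisfy ψ(t)/t → ∞ as t → ∞. Then the function φ̃(x,y) := sup over (α,b) ∈ S of (α + b·y − ψ(|α|+|b|)·x) is finite for every x > 0 and y ∈ ℝⁿ. -/
/-! With `t = |α| + ‖b‖`, each term of the supremum is at most `t * (1 + ‖y‖) - ψ t * x`, and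
this is bounded above in `t ≥ 0` because `ψ` grows superlinearly. -/

open scoped RealInnerProductSpace

lemma add_inner_le_mul_one_add_norm {E : Type*} [NormedAddCommGroup E] [InnerProductSpace ℝ E]
    (a : ℝ) (b y : E) : a + ⟪b, y⟫ ≤ (|a| + ‖b‖) * (1 + ‖y‖) := by
  have ha : a ≤ |a| := le_abs_self a
  have hb : ⟪b, y⟫ ≤ ‖b‖ * ‖y‖ := real_inner_le_norm b y
  nlinarith [abs_nonneg a, norm_nonneg b, norm_nonneg y]

lemma exists_forall_mul_sub_mul_le_of_tendsto_div_atTop {ψ : ℝ → ℝ}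
    (hψnonneg : ∀ t, 0 ≤ t → 0 ≤ ψ t)
    (hψ : Filter.Tendsto (fun t => ψ t / t) Filter.atTop Filter.atTop) (c : ℝ) {x : ℝ}
    (hx : 0 < x) : ∃ B, ∀ t, 0 ≤ t → t * c - ψ t * x ≤ B := by
  obtain ⟨M₀, hM₀⟩ := Filter.eventually_atTop.1 (hψ.eventually_ge_atTop (c / x))
  set M := max M₀ 1
  refine ⟨M * |c|, fun t ht => ?_⟩
  have hc : t * c ≤ t * |c| := mul_le_mul_of_nonneg_left (le_abs_self c) ht
  rcases le_or_gt M t with hMt | htM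
  · have htpos : 0 < t := lt_of_lt_of_le (by positivity) hMt
    have hgrowth : t * c ≤ ψ t * x := by
      have := hM₀ t (le_trans (le_max_left _ _) hMt)
      rwa [div_le_div_iff₀ hx htpos, mul_comm c] at this
    nlinarith [abs_nonneg c, le_max_right M₀ 1]
  · nlinarith [hψnonneg t ht, abs_nonneg c]

theorem sup_extension_finite_general (n : ℕ)
    (S : Set (ℝ × EuclideanSpace ℝ (Fin n)))
    (ψ : ℝ → ℝ) (hψnonneg : ∀ t, 0 ≤ t → 0 ≤ ψ t)
    (hψ : Filter.Tendsto (fun t => ψ t / t) Filter.atTop Filter.atTop) :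
    ∀ x : ℝ, 0 < x → ∀ y : EuclideanSpace ℝ (Fin n),
      (⨆ p ∈ S, ((p.1 + ⟪p.2, y⟫ - ψ (|p.1| + ‖p.2‖) * x : ℝ) : EReal)) < ⊤ := by
  intro x hx y
  obtain ⟨B, hB⟩ := exists_forall_mul_sub_mul_le_of_tendsto_div_atTop hψnonneg hψ (1 + ‖y‖) hx
  refine lt_of_le_of_lt (iSup₂_le fun p _ => ?_) (EReal.coe_lt_top B)
  have hpiece := add_inner_le_mul_one_add_norm p.1 p.2 y
  have hsup := hB (|p.1| + ‖p.2‖) (by positivity)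
  exact EReal.coe_le_coe_iff.2 (by linarith)

theorem sup_extension_finite (n : ℕ) (Φ : EuclideanSpace ℝ (Fin n) → EReal)
    (S : Set (ℝ × EuclideanSpace ℝ (Fin n))) (hS : S.Nonempty)
    (hbot : ∀ y, Φ y ≠ ⊥) (hproper : ∃ y, Φ y ≠ ⊤)
    (hlsc : LowerSemicontinuous Φ)
    (hconv : ∀ y z : EuclideanSpace ℝ (Fin n), ∀ a b : ℝ, 0 ≤ a → 0 ≤ b → a + b = 1 →
      Φ (a • y + b • z) ≤ (a : EReal) * Φ y + (b : EReal) * Φ z)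
    (hrep : ∀ y, Φ y = ⨆ p ∈ S, ((p.1 + ⟪p.2, y⟫ : ℝ) : EReal))
    (ψ : ℝ → ℝ) (hψnonneg : ∀ t, 0 ≤ t → 0 ≤ ψ t)
    (hψ : Filter.Tendsto (fun t => ψ t / t) Filter.atTop Filter.atTop) :
    ∀ x : ℝ, 0 < x → ∀ y : EuclideanSpace ℝ (Fin n),
      (⨆ p ∈ S, ((p.1 + ⟪p.2, y⟫ - ψ (|p.1| + ‖p.2‖) * x : ℝ) : EReal)) < ⊤ :=
  sup_extension_finite_general n S ψ hψnonneg hψ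
end

section
/- Let Φ : ℝⁿ → (-∞,∞] be proper, lsc, convex, and strictly convex on its effective domain dom Φ = {y : Φ(y) < ∞}. Then for each fixed x > 0, the function y ↦ inf_{y'∈ℝⁿ}(Φ(y') + |y−y'|²/x) is strictly convex on ℝⁿ. -/
open Set

lemma lsc_exists_min {α : Type*} [TopologicalSpace α] {s : Set α} (hs : IsCompact s)
    (hcl : IsClosed s) (hne : s.Nonempty) {f : α → EReal} (hf : LowerSemicontinuous f) :
    ∃ p ∈ s, ∀ z ∈ s, f p ≤ f z := by
  have key : (⋂ w : s, {z ∈ s | f z ≤ f w}).Nonempty := by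
    have hne' : Nonempty s := hne.to_subtype
    apply IsCompact.nonempty_iInter_of_directed_nonempty_isCompact_isClosed
    · intro w w'
      rcases le_total (f w) (f w') with h | h
      · exact ⟨w, subset_rfl, fun z hz => ⟨hz.1, hz.2.trans h⟩⟩
      · exact ⟨w', fun z hz => ⟨hz.1, hz.2.trans h⟩, subset_rfl⟩
    · exact fun w => ⟨w, w.2, le_rfl⟩
    · exact fun w => hs.of_isClosed_subset (hcl.inter (hf.isClosed_preimage _)) (fun z hz => hz.1)
    · exact fun w => hcl.inter (hf.isClosed_preimage _)
  obtain ⟨p, hp⟩ := key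
  simp only [mem_iInter, mem_setOf_eq] at hp
  obtain ⟨w0, hw0⟩ := hne
  exact ⟨p, (hp ⟨w0, hw0⟩).1, fun z hz => (hp ⟨z, hz⟩).2⟩

lemma affine_lb (n : ℕ) (Φ : EuclideanSpace ℝ (Fin n) → EReal)
    (hbot : ∀ y, Φ y ≠ ⊥) (hlsc : LowerSemicontinuous Φ)
    (hconv : ∀ y z : EuclideanSpace ℝ (Fin n), ∀ a b : ℝ, 0 ≤ a → 0 ≤ b → a + b = 1 →
      Φ (a • y + b • z) ≤ (a : EReal) * Φ y + (b : EReal) * Φ z)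
    (y₀ : EuclideanSpace ℝ (Fin n)) (c₀ : ℝ) (hy₀ : Φ y₀ = (c₀ : EReal)) :
    ∃ K : ℝ, 0 ≤ K ∧ ∀ z, ((-K * (1 + ‖z - y₀‖) : ℝ) : EReal) ≤ Φ z := by
  obtain ⟨p, hpB, hpmin⟩ := lsc_exists_min (isCompact_closedBall y₀ 1)
    Metric.isClosed_closedBall ⟨y₀, Metric.mem_closedBall_self zero_le_one⟩ hlsc
  have hc : ∃ c : ℝ, (c : EReal) ≤ Φ p := by
    rcases eq_or_ne (Φ p) ⊤ with h | h
    · exact ⟨0, h ▸ le_top⟩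
    · exact ⟨(Φ p).toReal, le_of_eq (EReal.coe_toReal h (hbot p))⟩
  obtain ⟨c, hc⟩ := hc
  refine ⟨|c| + |c₀| + |c - c₀|, by positivity, fun z => ?_⟩
  set K := |c| + |c₀| + |c - c₀| with hK
  rcases le_or_gt ‖z - y₀‖ 1 with hz | hz
  · have h1 : ((-K * (1 + ‖z - y₀‖) : ℝ) : EReal) ≤ (c : EReal) := by
      rw [EReal.coe_le_coe_iff]
      have h0 : (0:ℝ) ≤ ‖z - y₀‖ := norm_nonneg _
      have : -c ≤ |c| := neg_le_abs c
      nlinarith [abs_nonneg c₀, abs_nonneg (c - c₀), abs_nonneg c, norm_nonneg (z - y₀)]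
    refine h1.trans (hc.trans (hpmin z ?_))
    simpa [Metric.mem_closedBall, dist_eq_norm] using hz
  · set R := ‖z - y₀‖ with hR
    have hR1 : 1 < R := hz
    have hR0 : 0 < R := lt_trans one_pos hR1
    have hw : (1 - R⁻¹) • y₀ + R⁻¹ • z = y₀ + R⁻¹ • (z - y₀) := by
      rw [sub_smul, one_smul, smul_sub]; abel
    have hwB : y₀ + R⁻¹ • (z - y₀) ∈ Metric.closedBall y₀ 1 := by
      simp only [Metric.mem_closedBall, dist_eq_norm, add_sub_cancel_left, norm_smul,
        norm_inv, Real.norm_eq_abs, abs_of_pos hR0]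
      rw [← hR, inv_mul_cancel₀ (ne_of_gt hR0)]
    have hconv' := hconv y₀ z (1 - R⁻¹) R⁻¹
      (by simp only [sub_nonneg]; exact inv_le_one_of_one_le₀ hR1.le)
      (by positivity) (by ring)
    rw [hw, hy₀] at hconv'
    have hcw : (c : EReal) ≤ ((1 - R⁻¹ : ℝ) : EReal) * (c₀ : EReal) + (R⁻¹ : ℝ) * Φ z :=
      (hc.trans (hpmin _ hwB)).trans hconv'
    rcases eq_or_ne (Φ z) ⊤ with hΦz | htop
    · exact hΦz ▸ le_top
    · obtain ⟨v, hΦz⟩ : ∃ v : ℝ, Φ z = (v : EReal) :=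
        ⟨(Φ z).toReal, (EReal.coe_toReal htop (hbot z)).symm⟩
      rw [hΦz, ← EReal.coe_mul, ← EReal.coe_mul, ← EReal.coe_add, EReal.coe_le_coe_iff] at hcw
      rw [hΦz, EReal.coe_le_coe_iff]
      have h2 : R * c - (R - 1) * c₀ ≤ v := by
        have := mul_le_mul_of_nonneg_left hcw hR0.le
        field_simp at this
        nlinarith
      have h3 : -K * (1 + R) ≤ R * c - (R - 1) * c₀ := by
        have ha : -(c - c₀) ≤ |c - c₀| := neg_le_abs _
        have hb : (c-c₀) ≤ |c - c₀| := le_abs_self _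
        have hcc : -c₀ ≤ |c₀| := neg_le_abs _
        nlinarith [abs_nonneg c, abs_nonneg c₀, abs_nonneg (c - c₀)]
      linarith

lemma prox_exists (n : ℕ) (Φ : EuclideanSpace ℝ (Fin n) → EReal)
    (hbot : ∀ y, Φ y ≠ ⊥) (hlsc : LowerSemicontinuous Φ)
    (hconv : ∀ y z : EuclideanSpace ℝ (Fin n), ∀ a b : ℝ, 0 ≤ a → 0 ≤ b → a + b = 1 →
      Φ (a • y + b • z) ≤ (a : EReal) * Φ y + (b : EReal) * Φ z)
    (y₀ : EuclideanSpace ℝ (Fin n)) (c₀ : ℝ) (hy₀ : Φ y₀ = (c₀ : EReal))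
    (x : ℝ) (hx : 0 < x) (y : EuclideanSpace ℝ (Fin n)) :
    ∃ (p : EuclideanSpace ℝ (Fin n)) (c : ℝ), Φ p = (c : EReal) ∧
      ∀ z, ((c + ‖y - p‖ ^ 2 / x : ℝ) : EReal) ≤ Φ z + ((‖y - z‖ ^ 2 / x : ℝ) : EReal) := by
  obtain ⟨K, hK0, hKb⟩ := affine_lb n Φ hbot hlsc hconv y₀ c₀ hy₀
  set g : EuclideanSpace ℝ (Fin n) → EReal :=
    fun z => Φ z + ((‖y - z‖ ^ 2 / x : ℝ) : EReal) with hg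
  have hq : Continuous fun z : EuclideanSpace ℝ (Fin n) => ((‖y - z‖ ^ 2 / x : ℝ) : EReal) :=
    continuous_coe_real_ereal.comp (((continuous_const.sub continuous_id).norm.pow 2).div_const x)
  have hglsc : LowerSemicontinuous g := by
    apply hlsc.add' hq.lowerSemicontinuous
    intro z
    exact EReal.continuousAt_add (Or.inr (EReal.coe_ne_bot _)) (Or.inr (EReal.coe_ne_top _))
  set d : ℝ := ‖y - y₀‖ with hd
  set β : ℝ := c₀ + ‖y - y₀‖ ^ 2 / x with hβ
  set S : ℝ := max 1 (β + K * (1 + d) + 1) with hS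
  set ρ : ℝ := d + max (x * (K + S)) 1 with hρ
  have hS1 : 1 ≤ S := le_max_left _ _
  have hS2 : β + K * (1 + d) + 1 ≤ S := le_max_right _ _
  have hd0 : 0 ≤ d := norm_nonneg _
  have hρ0 : 0 ≤ ρ := by positivity
  have hout : ∀ z, ρ < ‖z - y₀‖ → (β : EReal) < g z := by
    intro z hzρ
    set r : ℝ := ‖z - y₀‖ with hr
    set t : ℝ := r - d with ht
    have ht1 : 1 < t := by
      have := le_max_right (x * (K + S)) 1
      simp only [ht, hρ] at *; linarith
    have ht2 : x * (K + S) < t := by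
      have := le_max_left (x * (K + S)) 1
      simp only [ht, hρ] at *; linarith
    have hyz : t ≤ ‖y - z‖ := by
      have h1 : r ≤ ‖z - y‖ + d := norm_sub_le_norm_sub_add_norm_sub z y y₀
      rw [norm_sub_rev]; linarith
    have hreal : β < -K * (1 + r) + ‖y - z‖ ^ 2 / x := by
      have ht0 : 0 < t := lt_trans one_pos ht1
      have hsq : t ^ 2 ≤ ‖y - z‖ ^ 2 := by nlinarith [norm_nonneg (y - z)]
      have key : (β + K * (1 + r)) * x < t ^ 2 := by
        have e1 : x * (K + S) * t < t ^ 2 := by nlinarith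
        have e2 : x * S * 1 ≤ x * S * t :=
          mul_le_mul_of_nonneg_left ht1.le (mul_nonneg hx.le (le_trans zero_le_one hS1))
        have e3 : x * (β + K * (1 + d) + 1) ≤ x * S := mul_le_mul_of_nonneg_left hS2 hx.le
        nlinarith [e1, e2, e3, hx, ht1, ht0]
      have h1 : β + K * (1 + r) < t ^ 2 / x := (lt_div_iff₀ hx).2 key
      have h2 : t ^ 2 / x ≤ ‖y - z‖ ^ 2 / x := by gcongr
      linarith
    calc (β : EReal) < ((-K * (1 + r) + ‖y - z‖ ^ 2 / x : ℝ) : EReal) :=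
          EReal.coe_lt_coe_iff.2 hreal
      _ = ((-K * (1 + r) : ℝ) : EReal) + ((‖y - z‖ ^ 2 / x : ℝ) : EReal) := EReal.coe_add _ _
      _ ≤ g z := add_le_add (hKb z) le_rfl
  obtain ⟨p, hpB, hpmin⟩ := lsc_exists_min (isCompact_closedBall y₀ ρ)
    Metric.isClosed_closedBall ⟨y₀, Metric.mem_closedBall_self hρ0⟩ hglsc
  have hgy₀ : g y₀ = (β : EReal) := by
    simp only [hg, hy₀, hβ, EReal.coe_add]
  have hgpβ : g p ≤ (β : EReal) := hgy₀ ▸ hpmin y₀ (Metric.mem_closedBall_self hρ0)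
  have hmin : ∀ z, g p ≤ g z := by
    intro z
    rcases le_or_gt ‖z - y₀‖ ρ with h | h
    · exact hpmin z (by simpa [Metric.mem_closedBall, dist_eq_norm] using h)
    · exact hgpβ.trans (hout z h).le
  have hptop : Φ p ≠ ⊤ := by
    intro h
    have : g p = ⊤ := by simp [hg, h]
    rw [this] at hgpβ
    exact absurd hgpβ (by simp)
  refine ⟨p, (Φ p).toReal, (EReal.coe_toReal hptop (hbot p)).symm, fun z => ?_⟩
  have : g p = (((Φ p).toReal + ‖y - p‖ ^ 2 / x : ℝ) : EReal) := by
    rw [hg]; simp only [EReal.coe_add, EReal.coe_toReal hptop (hbot p)]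
  exact this ▸ hmin z

open RealInnerProductSpace in
lemma combo_norm_sq {E : Type*} [NormedAddCommGroup E] [InnerProductSpace ℝ E]
    (v w : E) (a b : ℝ) (hab : a + b = 1) :
    ‖a • v + b • w‖ ^ 2 = a * ‖v‖ ^ 2 + b * ‖w‖ ^ 2 - a * b * ‖v - w‖ ^ 2 := by
  have hv : ∀ u : E, ‖u‖ ^ 2 = ⟪u, u⟫ := fun u => (real_inner_self_eq_norm_sq u).symm
  rw [hv, hv, hv, hv]
  simp only [inner_add_left, inner_add_right, inner_sub_left, inner_sub_right,
    real_inner_smul_left, real_inner_smul_right, real_inner_comm w v]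
  linear_combination (⟪v, v⟫ * a + ⟪w, w⟫ * b) * hab

theorem infConv_strictConvex (n : ℕ) (Φ : EuclideanSpace ℝ (Fin n) → EReal)
    (hbot : ∀ y, Φ y ≠ ⊥) (hproper : ∃ y, Φ y ≠ ⊤)
    (hlsc : LowerSemicontinuous Φ)
    (hconv : ∀ y z : EuclideanSpace ℝ (Fin n), ∀ a b : ℝ, 0 ≤ a → 0 ≤ b → a + b = 1 →
      Φ (a • y + b • z) ≤ (a : EReal) * Φ y + (b : EReal) * Φ z)
    (hstrict : ∀ y₁ y₂ : EuclideanSpace ℝ (Fin n), Φ y₁ ≠ ⊤ → Φ y₂ ≠ ⊤ → y₁ ≠ y₂ →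
      ∀ a b : ℝ, 0 < a → 0 < b → a + b = 1 →
        Φ (a • y₁ + b • y₂) < (a : EReal) * Φ y₁ + (b : EReal) * Φ y₂)
    (x : ℝ) (hx : 0 < x) :
    ∀ y₁ y₂ : EuclideanSpace ℝ (Fin n), y₁ ≠ y₂ →
      ∀ a b : ℝ, 0 < a → 0 < b → a + b = 1 →
        (⨅ y' : EuclideanSpace ℝ (Fin n),
            Φ y' + ((‖(a • y₁ + b • y₂) - y'‖ ^ 2 / x : ℝ) : EReal))
        < (a : EReal) * (⨅ y' : EuclideanSpace ℝ (Fin n), Φ y' + ((‖y₁ - y'‖ ^ 2 / x : ℝ) : EReal))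
          + (b : EReal) * (⨅ y' : EuclideanSpace ℝ (Fin n), Φ y' + ((‖y₂ - y'‖ ^ 2 / x : ℝ) : EReal)) := by
  intro y₁ y₂ hne a b ha hb hab
  obtain ⟨y₀, hy₀top⟩ := hproper
  have hy₀ : Φ y₀ = ((Φ y₀).toReal : EReal) := (EReal.coe_toReal hy₀top (hbot y₀)).symm
  obtain ⟨p₁, c₁, h₁, hmin₁⟩ := prox_exists n Φ hbot hlsc hconv y₀ _ hy₀ x hx y₁
  obtain ⟨p₂, c₂, h₂, hmin₂⟩ := prox_exists n Φ hbot hlsc hconv y₀ _ hy₀ x hx y₂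
  set q₁ : ℝ := ‖y₁ - p₁‖ ^ 2 / x with hq₁
  set q₂ : ℝ := ‖y₂ - p₂‖ ^ 2 / x with hq₂
  have e₁ : (⨅ y' : EuclideanSpace ℝ (Fin n), Φ y' + ((‖y₁ - y'‖ ^ 2 / x : ℝ) : EReal))
      = ((c₁ + q₁ : ℝ) : EReal) := by
    refine le_antisymm (iInf_le_of_le p₁ ?_) (le_iInf hmin₁)
    rw [h₁, ← EReal.coe_add]
  have e₂ : (⨅ y' : EuclideanSpace ℝ (Fin n), Φ y' + ((‖y₂ - y'‖ ^ 2 / x : ℝ) : EReal))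
      = ((c₂ + q₂ : ℝ) : EReal) := by
    refine le_antisymm (iInf_le_of_le p₂ ?_) (le_iInf hmin₂)
    rw [h₂, ← EReal.coe_add]
  rw [e₁, e₂, ← EReal.coe_mul, ← EReal.coe_mul, ← EReal.coe_add]
  set v : EuclideanSpace ℝ (Fin n) := y₁ - p₁ with hv
  set w : EuclideanSpace ℝ (Fin n) := y₂ - p₂ with hw
  have hmid : (a • y₁ + b • y₂) - (a • p₁ + b • p₂) = a • v + b • w := by
    rw [hv, hw, smul_sub, smul_sub]; abel
  have hLHS : (⨅ y' : EuclideanSpace ℝ (Fin n),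
      Φ y' + ((‖(a • y₁ + b • y₂) - y'‖ ^ 2 / x : ℝ) : EReal))
      ≤ Φ (a • p₁ + b • p₂) + ((‖a • v + b • w‖ ^ 2 / x : ℝ) : EReal) := by
    refine iInf_le_of_le (a • p₁ + b • p₂) ?_
    rw [hmid]
  have hpar : ‖a • v + b • w‖ ^ 2 = a * ‖v‖ ^ 2 + b * ‖w‖ ^ 2 - a * b * ‖v - w‖ ^ 2 :=
    combo_norm_sq v w a b hab
  refine lt_of_le_of_lt hLHS ?_
  by_cases hvw : v = w
  · -- quadratic parts equal; Φ strictly convex gives strict inequality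
    have hp12 : p₁ ≠ p₂ := by
      intro h
      apply hne
      have h'' : y₁ - p₁ = y₂ - p₂ := hvw
      rw [h] at h''
      exact sub_left_injective h''
    have hΦ : Φ (a • p₁ + b • p₂) < ((a * c₁ + b * c₂ : ℝ) : EReal) := by
      have := hstrict p₁ p₂ (by rw [h₁]; exact EReal.coe_ne_top _)
        (by rw [h₂]; exact EReal.coe_ne_top _) hp12 a b ha hb hab
      rwa [h₁, h₂, ← EReal.coe_mul, ← EReal.coe_mul, ← EReal.coe_add] at this
    have hQ : ‖a • v + b • w‖ ^ 2 / x = a * q₁ + b * q₂ := by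
      rw [hpar, hvw, sub_self, norm_zero, hq₁, hq₂, ← hvw]
      field_simp
      ring
    calc Φ (a • p₁ + b • p₂) + ((‖a • v + b • w‖ ^ 2 / x : ℝ) : EReal)
        < ((a * c₁ + b * c₂ : ℝ) : EReal) + ((‖a • v + b • w‖ ^ 2 / x : ℝ) : EReal) :=
          EReal.add_lt_add_right_coe hΦ _
      _ = ((a * (c₁ + q₁) + b * (c₂ + q₂) : ℝ) : EReal) := by
          rw [← EReal.coe_add, hQ, EReal.coe_eq_coe_iff]; ring
  · -- Φ convex; quadratic part strictly convex
    have hΦ : Φ (a • p₁ + b • p₂) ≤ ((a * c₁ + b * c₂ : ℝ) : EReal) := by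
      have := hconv p₁ p₂ a b ha.le hb.le hab
      rwa [h₁, h₂, ← EReal.coe_mul, ← EReal.coe_mul, ← EReal.coe_add] at this
    have hQ : ‖a • v + b • w‖ ^ 2 / x < a * q₁ + b * q₂ := by
      have hvw0 : 0 < ‖v - w‖ := by
        rw [norm_pos_iff, sub_ne_zero]; exact hvw
      have h0 : 0 < a * b * ‖v - w‖ ^ 2 := by positivity
      have heq : a * (‖v‖ ^ 2 / x) + b * (‖w‖ ^ 2 / x)
          = (a * ‖v‖ ^ 2 + b * ‖w‖ ^ 2) / x := by field_simp
      rw [hpar, hq₁, hq₂, heq]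
      gcongr ?_ / x
      linarith
    calc Φ (a • p₁ + b • p₂) + ((‖a • v + b • w‖ ^ 2 / x : ℝ) : EReal)
        ≤ ((a * c₁ + b * c₂ : ℝ) : EReal) + ((‖a • v + b • w‖ ^ 2 / x : ℝ) : EReal) :=
          add_le_add hΦ le_rfl
      _ = ((a * c₁ + b * c₂ + ‖a • v + b • w‖ ^ 2 / x : ℝ) : EReal) := (EReal.coe_add _ _).symm
      _ < ((a * (c₁ + q₁) + b * (c₂ + q₂) : ℝ) : EReal) := by
          rw [EReal.coe_lt_coe_iff]; nlinarith [hQ]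
end

section
/- Let φ : [0,∞) × ℝⁿ → (-∞,∞] be convex with φ(0,y) = 0 for all y ∈ ℝⁿ and φ finite on (0,∞) × ℝⁿ. Then φ(x,y) does not depend on y, i.e., φ(x,y) = φ(x,y') for all x > 0 and y, y' ∈ ℝⁿ. -/
theorem convex_zero_boundary_indep (n : ℕ) (φ : ℝ × EuclideanSpace ℝ (Fin n) → EReal)
    (hconv : ∀ p q : ℝ × EuclideanSpace ℝ (Fin n), 0 ≤ p.1 → 0 ≤ q.1 →
      ∀ a b : ℝ, 0 ≤ a → 0 ≤ b → a + b = 1 →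
        φ (a • p + b • q) ≤ (a : EReal) * φ p + (b : EReal) * φ q)
    (hzero : ∀ y : EuclideanSpace ℝ (Fin n), φ (0, y) = 0)
    (hfin : ∀ x : ℝ, 0 < x → ∀ y : EuclideanSpace ℝ (Fin n), φ (x, y) ≠ ⊤ ∧ φ (x, y) ≠ ⊥) :
    ∀ x : ℝ, 0 < x → ∀ y y' : EuclideanSpace ℝ (Fin n), φ (x, y) = φ (x, y') := by
  -- Key: φ(s,y) ≤ (s/X) φ(X,Y) for 0 < s < X
  have key : ∀ s X : ℝ, 0 < s → s < X → ∀ y Y : EuclideanSpace ℝ (Fin n),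
      φ (s, y) ≤ ((s / X : ℝ) : EReal) * φ (X, Y) := by
    intro s X hs hsX y Y
    have hX : 0 < X := hs.trans hsX
    set a : ℝ := s / X with ha_def
    have ha : 0 < a := div_pos hs hX
    have ha1 : a < 1 := (div_lt_one hX).mpr hsX
    set b : ℝ := 1 - a with hb_def
    have hb : 0 < b := by rw [hb_def]; linarith
    set w : EuclideanSpace ℝ (Fin n) := b⁻¹ • (y - a • Y) with hw_def
    have h := hconv (X, Y) (0, w) hX.le le_rfl a b ha.le hb.le (by ring)
    have hpt : a • ((X, Y) : ℝ × EuclideanSpace ℝ (Fin n)) + b • ((0, w)) = (s, y) := by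
      have h2 : a • Y + b • w = y := by
        rw [hw_def, smul_smul, mul_inv_cancel₀ hb.ne']
        simp
      rw [Prod.smul_mk, Prod.smul_mk, Prod.mk_add_mk, h2]
      have h1 : a • X + b • 0 = s := by
        simp only [smul_eq_mul, mul_zero, add_zero, ha_def]
        field_simp
      rw [h1]
    rw [hpt, hzero w, mul_zero, add_zero] at h
    exact h
  intro x hx y y'
  -- φ(x, ·) is real-valued
  set f : EuclideanSpace ℝ (Fin n) → ℝ := fun v => (φ (x, v)).toReal with hf_def
  have hcoe : ∀ v, φ (x, v) = ((f v : ℝ) : EReal) := by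
    intro v
    exact (EReal.coe_toReal (hfin x hx v).1 (hfin x hx v).2).symm
  -- upper bound
  set C : ℝ := (φ (2 * x, 0)).toReal with hC_def
  have hCcoe : φ (2 * x, 0) = ((C : ℝ) : EReal) :=
    (EReal.coe_toReal (hfin (2 * x) (by linarith) 0).1 (hfin (2 * x) (by linarith) 0).2).symm
  set D : ℝ := (x / (2 * x)) * C with hD_def
  have hbound : ∀ v, f v ≤ D := by
    intro v
    have h := key x (2 * x) hx (by linarith) v 0
    rw [hcoe v, hCcoe, ← EReal.coe_mul] at h
    exact_mod_cast h
  -- convexity in second coordinate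
  have conv2 : ∀ a b : ℝ, 0 ≤ a → 0 ≤ b → a + b = 1 →
      ∀ u v : EuclideanSpace ℝ (Fin n), f (a • u + b • v) ≤ a * f u + b * f v := by
    intro a b ha hb hab u v
    have h := hconv (x, u) (x, v) hx.le hx.le a b ha hb hab
    have hpt : a • ((x, u) : ℝ × EuclideanSpace ℝ (Fin n)) + b • ((x, v)) = (x, a • u + b • v) := by
      rw [Prod.smul_mk, Prod.smul_mk, Prod.mk_add_mk]
      congr 1
      simp only [smul_eq_mul]
      nlinarith
    rw [hpt, hcoe, hcoe u, hcoe v, ← EReal.coe_mul, ← EReal.coe_mul, ← EReal.coe_add] at h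
    exact_mod_cast h
  -- bounded convex ⇒ f y₁ ≤ f y₂ for all y₁ y₂
  have main : ∀ u v : EuclideanSpace ℝ (Fin n), f u ≤ f v := by
    intro u v
    by_contra hlt
    push_neg at hlt
    set ε : ℝ := f u - f v with hε_def
    have hε : 0 < ε := by rw [hε_def]; linarith
    have hDv : 0 ≤ D - f v := by linarith [hbound v]
    set t : ℝ := max 2 (2 * (D - f v) / ε) with ht_def
    have ht2 : (2 : ℝ) ≤ t := le_max_left _ _
    have ht0 : 0 < t := by linarith
    set z : EuclideanSpace ℝ (Fin n) := t • u + (1 - t) • v with hz_def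
    have hzeq : (1 / t) • z + (1 - 1 / t) • v = u := by
      have h1 : (1 / t) * t = 1 := by field_simp
      have h2 : 1 / t * (1 - t) + (1 - 1 / t) = 0 := by field_simp; ring
      rw [hz_def, smul_add, smul_smul, smul_smul, h1, add_assoc, ← add_smul, h2,
        one_smul, zero_smul, add_zero]
    have h := conv2 (1 / t) (1 - 1 / t) (by positivity)
      (by rw [sub_nonneg]; rw [div_le_one ht0]; linarith) (by ring) z v
    rw [hzeq] at h
    have hzb := hbound z
    -- f u ≤ (1/t) D + (1 - 1/t) f v = f v + (D - f v)/t
    have h2 : f u ≤ f v + (D - f v) / t := by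
      have : (1 / t) * f z ≤ (1 / t) * D := by
        apply mul_le_mul_of_nonneg_left hzb (by positivity)
      calc f u ≤ (1 / t) * f z + (1 - 1 / t) * f v := h
        _ ≤ (1 / t) * D + (1 - 1 / t) * f v := by linarith
        _ = f v + (D - f v) / t := by field_simp; ring
    have h3 : (D - f v) / t ≤ ε / 2 := by
      rw [div_le_iff₀ ht0]
      have := le_max_right 2 (2 * (D - f v) / ε)
      rw [ht_def]
      calc D - f v = (2 * (D - f v) / ε) * (ε / 2) := by field_simp
        _ ≤ max 2 (2 * (D - f v) / ε) * (ε / 2) := by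
            apply mul_le_mul_of_nonneg_right (le_max_right _ _) (by linarith)
        _ = ε / 2 * max 2 (2 * (D - f v) / ε) := by ring
    have h4 : f u ≤ f v + ε / 2 := by linarith
    rw [hε_def] at h4
    linarith
  have : f y = f y' := le_antisymm (main y y') (main y' y)
  rw [hcoe y, hcoe y', this]
end

section
/- Let Φ : ℝ → (-∞,∞] be given by Φ(y) = −ln y for y > 0 and +∞ for y ≤ 0. Then for x > 0 and y ∈ ℝ, inf_{y'∈ℝ}(Φ(y') + (y−y')²/x) = −ln((y + √(y²+2x))/2) + (√(y²+2x) − y)²/(4x). -/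
/-!
On `y' > 0` the objective `-log y' + (y - y')² / x` is strictly convex, so its infimum is attained
at the critical point `t = (y + √(y² + 2x)) / 2`, the positive root of `2t(t - y) = x`. Minimality
follows from the tangent-line bound `log u - log t ≤ u / t - 1` for `log`, and at `t` the value
equals the stated closed form because `y - t = (y - √(y² + 2x)) / 2`.
-/

open Classical in
noncomputable def PhiLog (y : ℝ) : EReal :=
  if 0 < y then ((-Real.log y : ℝ) : EReal) else ⊤

open Real

lemma PhiLog_add_coe_of_pos {u : ℝ} (hu : 0 < u) (r : ℝ) :
    PhiLog u + (r : EReal) = ((-log u + r : ℝ) : EReal) := by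
  rw [PhiLog, if_pos hu, EReal.coe_add]

lemma PhiLog_add_coe_of_nonpos {u : ℝ} (hu : u ≤ 0) (r : ℝ) :
    PhiLog u + (r : EReal) = ⊤ := by
  rw [PhiLog, if_neg hu.not_gt, EReal.top_add_coe]

lemma iInf_PhiLog_add_coe_eq {g : ℝ → ℝ} {t : ℝ} (ht : 0 < t)
    (hmin : ∀ u, 0 < u → -log t + g t ≤ -log u + g u) :
    ⨅ u, PhiLog u + (g u : EReal) = ((-log t + g t : ℝ) : EReal) := by
  refine le_antisymm ((iInf_le _ t).trans_eq (PhiLog_add_coe_of_pos ht _)) (le_iInf fun u => ?_)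
  rcases lt_or_ge 0 u with hu | hu
  · rw [PhiLog_add_coe_of_pos hu]
    exact EReal.coe_le_coe_iff.2 (hmin u hu)
  · rw [PhiLog_add_coe_of_nonpos hu]
    exact le_top

lemma log_sub_log_le_div_sub_one {u t : ℝ} (hu : 0 < u) (ht : 0 < t) :
    log u - log t ≤ u / t - 1 := by
  rw [← log_div hu.ne' ht.ne']
  exact log_le_sub_one_of_pos (div_pos hu ht)

lemma neg_log_add_sq_div_le_of_critical {x y t u : ℝ} (hx : 0 < x) (ht : 0 < t)
    (hcrit : 2 * t * (t - y) = x) (hu : 0 < u) :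
    -log t + (y - t) ^ 2 / x ≤ -log u + (y - u) ^ 2 / x := by
  have hlog : log u - log t ≤ (u - t) * (2 * (t - y)) / x := by
    have hty : t - y ≠ 0 := fun h => by rw [h, mul_zero] at hcrit; exact hx.ne' hcrit.symm
    refine (log_sub_log_le_div_sub_one hu ht).trans_eq ?_
    rw [← hcrit]
    field_simp
  have hsq : (y - u) ^ 2 / x - (y - t) ^ 2 / x = (u - t) * (2 * (t - y)) / x + (u - t) ^ 2 / x := by
    field_simp
    ring
  have : 0 ≤ (u - t) ^ 2 / x := by positivity
  linarith

lemma half_add_sqrt_pos_and_critical {x y : ℝ} (hx : 0 < x) :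
    0 < (y + √(y ^ 2 + 2 * x)) / 2 ∧
      2 * ((y + √(y ^ 2 + 2 * x)) / 2) * ((y + √(y ^ 2 + 2 * x)) / 2 - y) = x := by
  have hs : √(y ^ 2 + 2 * x) ^ 2 = y ^ 2 + 2 * x := sq_sqrt (by positivity)
  have hy : |y| < √(y ^ 2 + 2 * x) := by
    rw [← sqrt_sq_eq_abs]
    exact sqrt_lt_sqrt (sq_nonneg y) (by linarith)
  refine ⟨by linarith [neg_abs_le y], ?_⟩
  linear_combination hs / 2

theorem infConv_log (x y : ℝ) (hx : 0 < x) :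
    (⨅ y' : ℝ, PhiLog y' + (((y - y') ^ 2 / x : ℝ) : EReal))
      = ((-Real.log ((y + Real.sqrt (y ^ 2 + 2 * x)) / 2)
          + (Real.sqrt (y ^ 2 + 2 * x) - y) ^ 2 / (4 * x) : ℝ) : EReal) := by
  obtain ⟨ht, hcrit⟩ := half_add_sqrt_pos_and_critical (y := y) hx
  have hval : (y - (y + √(y ^ 2 + 2 * x)) / 2) ^ 2 / x = (√(y ^ 2 + 2 * x) - y) ^ 2 / (4 * x) := by
    field_simp
    ring
  rw [← hval]
  exact iInf_PhiLog_add_coe_eq (g := fun u => (y - u) ^ 2 / x) ht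
    fun u hu => neg_log_add_sq_div_le_of_critical hx ht hcrit hu
end

section
/- Let Φ, Ψ : ℝⁿ → (-∞,∞] be proper lower semicontinuous convex functions with ∂Φ(y) ⊆ ∂Ψ(y) for all y ∈ ℝⁿ. Then Φ = Ψ + c for some constant c ∈ ℝ. -/
open scoped RealInnerProductSpace

def subdiff (n : ℕ) (Φ : EuclideanSpace ℝ (Fin n) → EReal) (y : EuclideanSpace ℝ (Fin n)) :
    Set (EuclideanSpace ℝ (Fin n)) :=
  {b | ∀ z : EuclideanSpace ℝ (Fin n), Φ y + ((⟪b, z - y⟫ : ℝ) : EReal) ≤ Φ z}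

section helpers

variable {n : ℕ}
local notation "Esp" => EuclideanSpace ℝ (Fin n)

lemma subdiff_real {Θ : Esp → EReal} {b p : Esp} (hb : b ∈ subdiff n Θ p)
    (hp1 : Θ p ≠ ⊤) (hp2 : Θ p ≠ ⊥) {z : Esp} (hz1 : Θ z ≠ ⊤) (hz2 : Θ z ≠ ⊥) :
    (Θ p).toReal + ⟪b, z - p⟫ ≤ (Θ z).toReal := by
  have h := hb z
  rw [← EReal.coe_toReal hp1 hp2, ← EReal.coe_toReal hz1 hz2, ← EReal.coe_add,
    EReal.coe_le_coe_iff] at h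
  exact h

lemma le_coe_of_forall_lt' {x : EReal} {d : ℝ} (h : ∀ r : ℝ, (r : EReal) < x → (r : ℝ) ≤ d) :
    x ≤ (d : EReal) := by
  induction x with
  | bot => exact bot_le
  | coe r =>
    refine EReal.coe_le_coe_iff.2 ?_
    by_contra hc
    push_neg at hc
    have := h ((r + d)/2) (by exact_mod_cast by linarith)
    linarith
  | top =>
    have := h (d+1) (EReal.coe_lt_top _)
    linarith

end helpers
section chunk2
variable {n : ℕ}
local notation "Esp" => EuclideanSpace ℝ (Fin n)

private lemma key_real {P Y C A B l : ℝ} (hl : 0 < l) (hAB : A - B = C - P)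
    (h0 : 2*C ≤ Y + P) : P/(2*l) + l⁻¹*A ≤ l⁻¹*B + Y/(2*l) := by
  rw [inv_eq_one_div, div_mul_eq_mul_div, div_mul_eq_mul_div, div_add_div _ _ (by linarith) (by positivity), div_add_div _ _ (by positivity) (by linarith), div_le_div_iff₀ (by positivity) (by positivity)]
  have h3 : (0:ℝ) < l^3 := by positivity
  nlinarith [mul_le_mul_of_nonneg_right h0 h3.le, hAB]

-- key algebraic identity
lemma key_alg {l : ℝ} (hl : 0 < l) (x p y z : Esp) :
    ‖x - p‖^2/(2*l) + ⟪l⁻¹ • (x - p), y - x⟫ ≤ ⟪l⁻¹ • (x - p), z - p⟫ + ‖y - z‖^2/(2*l) := by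
  have h0 : (0:ℝ) ≤ ‖(y - z) - (x - p)‖^2 := sq_nonneg _
  rw [norm_sub_sq_real] at h0
  rw [real_inner_smul_left, real_inner_smul_left]
  have e3 : ⟪x - p, y - x⟫ - ⟪x - p, z - p⟫ = ⟪x - p, y - z⟫ - ‖x - p‖^2 := by
    rw [← inner_sub_right, ← real_inner_self_eq_norm_sq, ← inner_sub_right]
    congr 1
    abel
  exact key_real hl e3 (by rw [real_inner_comm] at h0; linarith)

end chunk2
section chunk3

lemma lsc_attains {α : Type*} [TopologicalSpace α] {K : Set α} (hK : IsCompact K)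
    (hKc : IsClosed K) (hne : K.Nonempty) {G : α → EReal} (hG : LowerSemicontinuous G) :
    ∃ p ∈ K, ∀ z ∈ K, G p ≤ G z := by
  haveI : Nonempty K := hne.to_subtype
  set t : K → Set α := fun i => {z ∈ K | G z ≤ G i} with ht
  have htcl : ∀ i, IsClosed (t i) := fun i =>
    hKc.inter (hG.isClosed_preimage (G i))
  have htn : ∀ i, (t i).Nonempty := fun i => ⟨i, i.2, le_refl _⟩
  have htc : ∀ i, IsCompact (t i) := fun i =>
    hK.of_isClosed_subset (htcl i) (fun z hz => hz.1)
  have htd : Directed (· ⊇ ·) t := by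
    intro i j
    rcases le_total (G i) (G j) with h | h
    · exact ⟨i, fun z hz => hz, fun z hz => ⟨hz.1, hz.2.trans h⟩⟩
    · exact ⟨j, fun z hz => ⟨hz.1, hz.2.trans h⟩, fun z hz => hz⟩
  obtain ⟨p, hp⟩ := IsCompact.nonempty_iInter_of_directed_nonempty_isCompact_isClosed t htd htn htc htcl
  simp only [Set.mem_iInter] at hp
  obtain ⟨p0, hp0⟩ := hne
  refine ⟨p, (hp ⟨p0, hp0⟩).1, fun z hz => (hp ⟨z, hz⟩).2⟩

end chunk3
section chunk4
variable {n : ℕ}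
local notation "Esp" => EuclideanSpace ℝ (Fin n)

lemma exists_minorant {Θ : Esp → EReal} (hbot : ∀ y, Θ y ≠ ⊥) (hproper : ∃ y, Θ y ≠ ⊤)
    (hlsc : LowerSemicontinuous Θ)
    (hconv : ∀ y z : Esp, ∀ a b : ℝ, 0 ≤ a → 0 ≤ b → a + b = 1 →
      Θ (a • y + b • z) ≤ (a : EReal) * Θ y + (b : EReal) * Θ z) :
    ∃ (L : Esp →L[ℝ] ℝ) (β : ℝ), ∀ z, ((L z + β : ℝ) : EReal) ≤ Θ z := by
  obtain ⟨x₀, hx₀⟩ := hproper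
  set S : Set (Esp × ℝ) := {q | Θ q.1 ≤ (q.2 : EReal)} with hS
  have hScl : IsClosed S := by
    have h1 : IsClosed {p : Esp × EReal | Θ p.1 ≤ p.2} :=
      lowerSemicontinuous_iff_isClosed_epigraph.1 hlsc
    have : S = (fun q : Esp × ℝ => ((q.1 : Esp), (q.2 : EReal))) ⁻¹' {p : Esp × EReal | Θ p.1 ≤ p.2} := rfl
    rw [this]
    exact h1.preimage (continuous_fst.prodMk (continuous_coe_real_ereal.comp continuous_snd))
  have hmem : ∀ {z : Esp} {t : ℝ}, Θ z ≠ ⊤ → (Θ z).toReal ≤ t → (z, t) ∈ S := by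
    intro z t h1 h2
    simp only [hS, Set.mem_setOf_eq]
    calc Θ z = ((Θ z).toReal : EReal) := (EReal.coe_toReal h1 (hbot z)).symm
      _ ≤ (t : EReal) := EReal.coe_le_coe_iff.2 h2
  have hSconv : Convex ℝ S := by
    rintro ⟨y, s⟩ hy ⟨z, t⟩ hz a b ha hb hab
    simp only [hS, Set.mem_setOf_eq] at hy hz
    have hpt : a • ((y, s) : Esp × ℝ) + b • ((z, t) : Esp × ℝ) = (a • y + b • z, a * s + b * t) := by
      simp [Prod.ext_iff, smul_eq_mul]
    rw [hpt]
    show Θ (a • y + b • z) ≤ ((a * s + b * t : ℝ) : EReal)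
    have hytop : Θ y ≠ ⊤ := fun h => (EReal.coe_lt_top s).not_ge (h ▸ hy)
    have hztop : Θ z ≠ ⊤ := fun h => (EReal.coe_lt_top t).not_ge (h ▸ hz)
    have hy' : (Θ y).toReal ≤ s := EReal.toReal_le_toReal hy (hbot y) (EReal.coe_ne_top s)
    have hz' : (Θ z).toReal ≤ t := EReal.toReal_le_toReal hz (hbot z) (EReal.coe_ne_top t)
    refine (hconv y z a b ha hb hab).trans ?_
    have hyr : Θ y = (((Θ y).toReal : ℝ) : EReal) := (EReal.coe_toReal hytop (hbot y)).symm
    have hzr : Θ z = (((Θ z).toReal : ℝ) : EReal) := (EReal.coe_toReal hztop (hbot z)).symm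
    rw [hyr, hzr, ← EReal.coe_mul, ← EReal.coe_mul, ← EReal.coe_add]
    refine EReal.coe_le_coe_iff.2 ?_
    have h1 := mul_le_mul_of_nonneg_left hy' ha
    have h2 := mul_le_mul_of_nonneg_left hz' hb
    linarith
  have hnotmem : (x₀, (Θ x₀).toReal - 1) ∉ S := by
    intro h
    simp only [hS, Set.mem_setOf_eq] at h
    have := EReal.toReal_le_toReal h (hbot x₀) (EReal.coe_ne_top _)
    rw [EReal.toReal_coe] at this
    linarith
  obtain ⟨f, u, hfu, hfS⟩ := geometric_hahn_banach_point_closed hSconv hScl hnotmem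
  -- decompose f
  set T : ℝ := (Θ x₀).toReal with hT
  set s₀ : ℝ := f (0, 1) with hs₀
  have hsplit : ∀ (z : Esp) (t : ℝ), f (z, t) = f (z, 0) + t * s₀ := by
    intro z t
    have : (z, t) = (z, (0:ℝ)) + t • ((0:Esp), (1:ℝ)) := by
      simp [Prod.ext_iff]
    rw [this, map_add, map_smul]
    simp [hs₀, smul_eq_mul]
  have hx₀S : (x₀, T) ∈ S := hmem hx₀ le_rfl
  have hs₀pos : 0 < s₀ := by
    rcases lt_trichotomy s₀ 0 with h | h | h
    · exfalso
      set k : ℝ := max 0 ((u - f (x₀, 0) - T * s₀)/s₀) with hk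
      have hk0 : 0 ≤ k := le_max_left _ _
      have hmem' : (x₀, T + k) ∈ S := hmem hx₀ (by linarith)
      have := hfS _ hmem'
      rw [hsplit] at this
      have hkge : (u - f (x₀, 0) - T * s₀)/s₀ ≤ k := le_max_right _ _
      have : u - f (x₀, 0) - T * s₀ ≥ k * s₀ := by
        rw [div_le_iff_of_neg h] at hkge
        linarith
      linarith
    · exfalso
      have h1 := hfS _ hx₀S
      rw [hsplit] at h1
      rw [hsplit] at hfu
      rw [h] at h1 hfu
      simp at h1 hfu
      linarith
    · exact h
  refine ⟨(-s₀⁻¹) • (f.comp (ContinuousLinearMap.inl ℝ Esp ℝ)), u / s₀, ?_⟩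
  intro z
  by_cases hz : Θ z = ⊤
  · rw [hz]; exact le_top
  have hzS : (z, (Θ z).toReal) ∈ S := hmem hz le_rfl
  have h1 := hfS _ hzS
  rw [hsplit] at h1
  rw [← EReal.coe_toReal hz (hbot z)]
  refine EReal.coe_le_coe_iff.2 ?_
  simp only [ContinuousLinearMap.smul_apply, ContinuousLinearMap.comp_apply,
    ContinuousLinearMap.inl_apply, smul_eq_mul]
  have key : (u - f (z, 0)) / s₀ ≤ (Θ z).toReal := by
    rw [div_le_iff₀ hs₀pos]; linarith
  have heq : -(s₀⁻¹ * f (z, 0)) + u / s₀ = (u - f (z, 0)) / s₀ := by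
    field_simp
    ring
  linarith

end chunk4
section chunk5
variable {n : ℕ}
local notation "Esp" => EuclideanSpace ℝ (Fin n)

noncomputable def env (Θ : EuclideanSpace ℝ (Fin n) → EReal) (l : ℝ) (x : EuclideanSpace ℝ (Fin n)) : EReal :=
  ⨅ z : EuclideanSpace ℝ (Fin n), Θ z + ((‖x - z‖^2/(2*l) : ℝ) : EReal)

private lemma far_bound {Mv C M s l : ℝ} (hl : 0 < l) (hs1 : 1 ≤ s)
    (h1 : (M + |Mv - C| + 1) * (2*l) ≤ s) : Mv ≤ C - M * s + s^2/(2*l) := by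
  have key : s * ((M + |Mv - C| + 1) * (2*l)) ≤ s * s := by
    apply mul_le_mul_of_nonneg_left h1 (by linarith)
  have h2 : M * s + |Mv - C| + 1 ≤ s^2/(2*l) := by
    rw [le_div_iff₀ (by positivity)]
    nlinarith [key, mul_nonneg (mul_nonneg (by linarith : (0:ℝ) ≤ 2*l) (abs_nonneg (Mv - C)))
      (by linarith : (0:ℝ) ≤ s - 1),
      mul_nonneg (by linarith : (0:ℝ) ≤ 2*l) (by linarith : (0:ℝ) ≤ s - 1)]
  nlinarith [le_abs_self (Mv - C), h2]

lemma exists_prox {Θ : Esp → EReal} (hbot : ∀ y, Θ y ≠ ⊥) (hlsc : LowerSemicontinuous Θ)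
    {z₀ : Esp} (hz₀ : Θ z₀ ≠ ⊤) {x : Esp} {C M l : ℝ} (hM : 0 ≤ M) (hl : 0 < l)
    (hloc : ∀ z, ((C - M * ‖x - z‖ : ℝ) : EReal) ≤ Θ z) :
    ∃ p : Esp, Θ p ≠ ⊤ ∧ ∀ z : Esp,
      Θ p + ((‖x - p‖^2/(2*l) : ℝ) : EReal) ≤ Θ z + ((‖x - z‖^2/(2*l) : ℝ) : EReal) := by
  set G : Esp → EReal := fun z => Θ z + ((‖x - z‖^2/(2*l) : ℝ) : EReal) with hG
  set Mv : ℝ := (Θ z₀).toReal + ‖x - z₀‖^2/(2*l) with hMv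
  have hGz₀ : G z₀ = (Mv : EReal) := by
    show Θ z₀ + _ = _
    conv_lhs => rw [← EReal.coe_toReal hz₀ (hbot z₀)]
    rw [← EReal.coe_add]
  set R : ℝ := max (max (dist z₀ x) 1) (2*l*(M + |Mv - C| + 1)) with hR
  have hR1 : 1 ≤ R := le_trans (le_max_right _ _) (le_max_left _ _)
  have hRz₀ : dist z₀ x ≤ R := le_trans (le_max_left _ _) (le_max_left _ _)
  have hR2 : 2*l*(M + |Mv - C| + 1) ≤ R := le_max_right _ _
  -- G is lsc
  have hGlsc : LowerSemicontinuous G := by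
    apply LowerSemicontinuous.add' hlsc
    · exact (continuous_coe_real_ereal.comp
        (by continuity : Continuous (fun z : Esp => ‖x - z‖^2/(2*l)))).lowerSemicontinuous
    · intro y
      apply EReal.continuousAt_add
      · right; exact EReal.coe_ne_bot _
      · left; exact hbot y
  obtain ⟨p, hpK, hpmin⟩ := lsc_attains (isCompact_closedBall x R) Metric.isClosed_closedBall
    ⟨z₀, by rwa [Metric.mem_closedBall]⟩ hGlsc
  -- far points have large G
  have hfar : ∀ z : Esp, z ∉ Metric.closedBall x R → (Mv : EReal) ≤ G z := by
    intro z hz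
    rw [Metric.mem_closedBall, not_le] at hz
    set s : ℝ := ‖x - z‖ with hs
    have hsR : R ≤ s := by
      rw [hs, norm_sub_rev, ← dist_eq_norm]
      exact hz.le
    have hs1 : 1 ≤ s := hR1.trans hsR
    have h1 : (M + |Mv - C| + 1) * (2*l) ≤ s := by
      calc (M + |Mv - C| + 1) * (2*l) = 2*l*(M + |Mv - C| + 1) := by ring
        _ ≤ R := hR2
        _ ≤ s := hsR
    have h3 : Mv ≤ C - M * s + s^2/(2*l) := far_bound hl hs1 h1
    calc (Mv : EReal) ≤ ((C - M * s + s^2/(2*l) : ℝ) : EReal) := EReal.coe_le_coe_iff.2 h3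
      _ = ((C - M * s : ℝ) : EReal) + ((s^2/(2*l) : ℝ) : EReal) := by rw [← EReal.coe_add]
      _ ≤ Θ z + ((s^2/(2*l) : ℝ) : EReal) := add_le_add_left (hloc z) _
      _ = G z := rfl
  have hpmin' : ∀ z : Esp, G p ≤ G z := by
    intro z
    by_cases hzK : z ∈ Metric.closedBall x R
    · exact hpmin z hzK
    · calc G p ≤ G z₀ := hpmin z₀ (by rwa [Metric.mem_closedBall])
        _ = (Mv : EReal) := hGz₀
        _ ≤ G z := hfar z hzK
  have hptop : Θ p ≠ ⊤ := by
    intro h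
    have h1 : G p ≤ (Mv : EReal) := hGz₀ ▸ hpmin z₀ (by rwa [Metric.mem_closedBall])
    rw [hG] at h1
    simp only [h] at h1
    rw [EReal.top_add_coe] at h1
    exact (EReal.coe_lt_top Mv).not_ge h1
  exact ⟨p, hptop, hpmin'⟩

end chunk5
section chunk6
variable {n : ℕ}
local notation "Esp" => EuclideanSpace ℝ (Fin n)

lemma prox_subdiff {Θ : Esp → EReal} (hbot : ∀ y, Θ y ≠ ⊥)
    (hconv : ∀ y z : Esp, ∀ a b : ℝ, 0 ≤ a → 0 ≤ b → a + b = 1 →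
      Θ (a • y + b • z) ≤ (a : EReal) * Θ y + (b : EReal) * Θ z)
    {l : ℝ} (hl : 0 < l) {x p : Esp} (hptop : Θ p ≠ ⊤)
    (hmin : ∀ z : Esp, Θ p + ((‖x - p‖^2/(2*l) : ℝ) : EReal) ≤ Θ z + ((‖x - z‖^2/(2*l) : ℝ) : EReal)) :
    l⁻¹ • (x - p) ∈ subdiff n Θ p := by
  intro z
  by_cases hz : Θ z = ⊤
  · rw [hz]; exact le_top
  set P : ℝ := (Θ p).toReal with hP
  set Z : ℝ := (Θ z).toReal with hZ
  have hPr : Θ p = (P : EReal) := (EReal.coe_toReal hptop (hbot p)).symm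
  have hZr : Θ z = (Z : EReal) := (EReal.coe_toReal hz (hbot z)).symm
  rw [hPr, hZr, ← EReal.coe_add, EReal.coe_le_coe_iff]
  rw [real_inner_smul_left]
  set ip : ℝ := ⟪x - p, z - p⟫ with hip
  set np : ℝ := ‖z - p‖^2 with hnp
  have hnp0 : 0 ≤ np := sq_nonneg _
  refine le_of_forall_pos_le_add ?_
  intro ε hε
  set t : ℝ := min 1 (ε*(2*l)/(np+1)) with htdef
  have ht0 : 0 < t := lt_min one_pos (by positivity)
  have ht1 : t ≤ 1 := min_le_left _ _
  have hvec : (1-t)•p + t•z = p + t•(z-p) := by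
    rw [sub_smul, one_smul, smul_sub]; abel
  have hcomb := hconv p z (1-t) t (by linarith) ht0.le (by ring)
  rw [hvec, hPr, hZr, ← EReal.coe_mul, ← EReal.coe_mul, ← EReal.coe_add] at hcomb
  have hWtop : Θ (p + t•(z-p)) ≠ ⊤ := fun h =>
    (EReal.coe_lt_top _).not_ge (h ▸ hcomb)
  set W : ℝ := (Θ (p + t•(z-p))).toReal with hW
  have hWr : Θ (p + t•(z-p)) = (W : EReal) := (EReal.coe_toReal hWtop (hbot _)).symm
  have hWle : W ≤ (1-t)*P + t*Z := by
    have := EReal.toReal_le_toReal hcomb (hbot _) (EReal.coe_ne_top _)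
    rwa [EReal.toReal_coe] at this
  have hminr : P + ‖x - p‖^2/(2*l) ≤ W + ‖x - (p + t•(z-p))‖^2/(2*l) := by
    have := hmin (p + t•(z-p))
    rw [hPr, hWr, ← EReal.coe_add, ← EReal.coe_add, EReal.coe_le_coe_iff] at this
    exact this
  have hxz : x - (p + t•(z-p)) = (x-p) - t•(z-p) := by abel
  have hnorm : ‖(x-p) - t•(z-p)‖^2 = ‖x-p‖^2 - 2*(t*ip) + t^2*np := by
    rw [norm_sub_sq_real, real_inner_smul_right, norm_smul]
    simp only [Real.norm_eq_abs, mul_pow, sq_abs, hip, hnp]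
    try ring
  rw [hxz, hnorm] at hminr
  -- now pure real manipulation
  set u : ℝ := 1/(2*l) with hu
  have hu0 : 0 < u := by positivity
  have R1 : P + ‖x-p‖^2*u ≤ (1-t)*P + t*Z + (‖x-p‖^2 - 2*(t*ip) + t^2*np)*u := by
    have e1 : ‖x-p‖^2/(2*l) = ‖x-p‖^2*u := by rw [hu]; ring
    have e2 : (‖x-p‖^2 - 2*(t*ip) + t^2*np)/(2*l) = (‖x-p‖^2 - 2*(t*ip) + t^2*np)*u := by
      rw [hu]; ring
    linarith [hminr, hWle, e1, e2]
  have R2 : t * (P + 2*ip*u - t*(np*u)) ≤ t * Z := by nlinarith [R1]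
  have R3 : P + 2*ip*u - t*(np*u) ≤ Z := le_of_mul_le_mul_left R2 ht0
  have h6 : t*(np*u) ≤ ε := by
    have ht2 : t ≤ ε*(2*l)/(np+1) := min_le_right _ _
    have : t*(np*u) ≤ (ε*(2*l)/(np+1))*(np*u) :=
      mul_le_mul_of_nonneg_right ht2 (by positivity)
    have he : (ε*(2*l)/(np+1))*(np*u) = ε*np/(np+1) := by
      rw [hu]; field_simp
    rw [he] at this
    have : ε*np/(np+1) ≤ ε := by
      rw [div_le_iff₀ (by positivity)]
      nlinarith
    linarith
  have hipl : ip/l = 2*ip*u := by rw [hu]; field_simp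
  rw [inv_mul_eq_div, hipl]
  linarith

end chunk6
section chunk7
variable {n : ℕ}
local notation "Esp" => EuclideanSpace ℝ (Fin n)

lemma env_le_self (Θ : Esp → EReal) {l : ℝ} (hl : 0 < l) (x : Esp) : env Θ l x ≤ Θ x := by
  have h := iInf_le (fun z : Esp => Θ z + ((‖x - z‖^2/(2*l) : ℝ) : EReal)) x
  simp only [sub_self, norm_zero, ne_eq, OfNat.ofNat_ne_zero, not_false_eq_true,
    zero_pow, zero_div, EReal.coe_zero, add_zero] at h
  exact h

lemma env_lower {Θ : Esp → EReal} {x : Esp} {C M l : ℝ} (hl : 0 < l)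
    (hloc : ∀ z, ((C - M * ‖x - z‖ : ℝ) : EReal) ≤ Θ z) :
    ((C - M^2*l/2 : ℝ) : EReal) ≤ env Θ l x := by
  refine le_iInf fun z => ?_
  have hreal : C - M^2*l/2 ≤ (C - M * ‖x - z‖) + ‖x - z‖^2/(2*l) := by
    have h2 : (0:ℝ) < 2*l := by linarith
    have h4 : M*‖x - z‖ - M^2*l/2 ≤ ‖x - z‖^2/(2*l) := by
      rw [le_div_iff₀ h2]
      nlinarith [sq_nonneg (‖x - z‖ - M*l)]
    linarith
  calc ((C - M^2*l/2 : ℝ) : EReal)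
      ≤ ((C - M * ‖x - z‖ + ‖x - z‖^2/(2*l) : ℝ) : EReal) := EReal.coe_le_coe_iff.2 hreal
    _ = ((C - M * ‖x - z‖ : ℝ) : EReal) + ((‖x - z‖^2/(2*l) : ℝ) : EReal) := by
        rw [← EReal.coe_add]
    _ ≤ Θ z + ((‖x - z‖^2/(2*l) : ℝ) : EReal) := add_le_add_left (hloc z) _

lemma env_ne_top {Θ : Esp → EReal} (hbot : ∀ y, Θ y ≠ ⊥) {z₀ : Esp} (hz₀ : Θ z₀ ≠ ⊤)
    {l : ℝ} (x : Esp) : env Θ l x ≠ ⊤ := by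
  have h := iInf_le (fun z : Esp => Θ z + ((‖x - z‖^2/(2*l) : ℝ) : EReal)) z₀
  rw [← EReal.coe_toReal hz₀ (hbot z₀), ← EReal.coe_add] at h
  exact (lt_of_le_of_lt h (EReal.coe_lt_top _)).ne

lemma env_subgrad {Θ : Esp → EReal} (hbot : ∀ y, Θ y ≠ ⊥) {l : ℝ} (hl : 0 < l)
    {x p : Esp} (hptop : Θ p ≠ ⊤) (hb : l⁻¹ • (x - p) ∈ subdiff n Θ p) (y : Esp) :
    env Θ l x + ((⟪l⁻¹ • (x - p), y - x⟫ : ℝ) : EReal) ≤ env Θ l y := by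
  refine le_iInf fun z => ?_
  by_cases hz : Θ z = ⊤
  · rw [hz, EReal.top_add_coe]; exact le_top
  have hkey := key_alg hl x p y z
  have hsub := subdiff_real hb hptop (hbot p) hz (hbot z)
  calc env Θ l x + ((⟪l⁻¹ • (x - p), y - x⟫ : ℝ) : EReal)
      ≤ (Θ p + ((‖x - p‖^2/(2*l) : ℝ) : EReal)) + ((⟪l⁻¹ • (x - p), y - x⟫ : ℝ) : EReal) :=
        add_le_add_left (iInf_le _ p) _
    _ = (((Θ p).toReal + (‖x - p‖^2/(2*l) + ⟪l⁻¹ • (x - p), y - x⟫) : ℝ) : EReal) := by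
        conv_lhs => rw [← EReal.coe_toReal hptop (hbot p)]
        rw [← EReal.coe_add, ← EReal.coe_add]
        exact EReal.coe_eq_coe_iff.2 (by ring)
    _ ≤ (((Θ p).toReal + (⟪l⁻¹ • (x - p), z - p⟫ + ‖y - z‖^2/(2*l)) : ℝ) : EReal) := by
        refine EReal.coe_le_coe_iff.2 ?_
        linarith [hkey]
    _ = (((Θ p).toReal + ⟪l⁻¹ • (x - p), z - p⟫ : ℝ) : EReal) + ((‖y - z‖^2/(2*l) : ℝ) : EReal) := by
        rw [← EReal.coe_add, add_assoc]
    _ ≤ ((Θ z).toReal : EReal) + ((‖y - z‖^2/(2*l) : ℝ) : EReal) :=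
        add_le_add_left (EReal.coe_le_coe_iff.2 hsub) _
    _ = Θ z + ((‖y - z‖^2/(2*l) : ℝ) : EReal) := by rw [EReal.coe_toReal hz (hbot z)]

end chunk7
section chunk8
variable {n : ℕ}
local notation "Esp" => EuclideanSpace ℝ (Fin n)

lemma telescope_half {f g : Esp → ℝ} {b : Esp → Esp}
    (hf : ∀ x y : Esp, f x + ⟪b x, y - x⟫ ≤ f y)
    (hg : ∀ x y : Esp, g x + ⟪b x, y - x⟫ ≤ g y) (x y : Esp) :
    0 ≤ (f y - g y) - (f x - g x) := by
  set K : ℝ := ⟪b x - b y, y - x⟫ with hK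
  set D : ℝ := (f y - g y) - (f x - g x) with hD
  have claim : ∀ m : ℕ, 0 < m → K / m ≤ D := by
    intro m hm
    have hmR : (0:ℝ) < m := by exact_mod_cast hm
    set w : ℕ → Esp := fun i => x + ((i:ℝ)/m) • (y - x) with hw
    set d : Esp := ((1:ℝ)/m) • (y - x) with hd
    have hstep : ∀ i : ℕ, w (i+1) - w i = d := by
      intro i
      rw [hw, hd]
      simp only []
      have : ((i+1 : ℕ):ℝ)/m - (i:ℝ)/m = 1/m := by push_cast; field_simp; ring
      rw [show x + (((i+1:ℕ):ℝ)/m) • (y - x) - (x + ((i:ℝ)/m) • (y - x))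
          = ((((i+1:ℕ):ℝ)/m) - ((i:ℝ)/m)) • (y - x) by rw [sub_smul]; abel, this]
    have hw0 : w 0 = x := by simp [hw]
    have hwm : w m = y := by
      rw [hw]
      simp only []
      rw [div_self (ne_of_gt hmR), one_smul]
      abel
    have hsum1 : ∑ i ∈ Finset.range m, ((f (w (i+1)) - g (w (i+1))) - (f (w i) - g (w i)))
        = (f (w m) - g (w m)) - (f (w 0) - g (w 0)) :=
      Finset.sum_range_sub (fun i => f (w i) - g (w i)) m
    have hsum2 : ∑ i ∈ Finset.range m, (⟪b (w i), d⟫ - ⟪b (w (i+1)), d⟫)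
        = ⟪b (w 0), d⟫ - ⟪b (w m), d⟫ :=
      Finset.sum_range_sub' (fun i => ⟪b (w i), d⟫) m
    have hterm : ∀ i ∈ Finset.range m,
        (⟪b (w i), d⟫ - ⟪b (w (i+1)), d⟫) ≤ ((f (w (i+1)) - g (w (i+1))) - (f (w i) - g (w i))) := by
      intro i _
      have h1 := hf (w i) (w (i+1))
      rw [hstep i] at h1
      have h2 := hg (w (i+1)) (w i)
      have : w i - w (i+1) = -d := by rw [← hstep i]; abel
      rw [this, inner_neg_right] at h2
      linarith
    have := Finset.sum_le_sum hterm
    rw [hsum1, hsum2, hw0, hwm] at this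
    have hKd : ⟪b x, d⟫ - ⟪b y, d⟫ = K / m := by
      rw [← inner_sub_left, hd, real_inner_smul_right, hK]
      ring
    rw [hKd] at this
    rw [hD]
    linarith
  by_contra hDneg
  push_neg at hDneg
  obtain ⟨m, hm⟩ := exists_nat_gt (max 1 (|K| / (-D)))
  have hm1 : (1:ℝ) < m := lt_of_le_of_lt (le_max_left _ _) hm
  have hm0 : 0 < m := by exact_mod_cast lt_trans zero_lt_one hm1
  have hmR : (0:ℝ) < m := by exact_mod_cast hm0
  have h1 : K ≤ D * m := by
    have := claim m hm0
    rwa [div_le_iff₀ hmR] at this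
  have h2 : |K| / (-D) < m := lt_of_le_of_lt (le_max_right _ _) hm
  have h3 : |K| < m * (-D) := by
    rwa [div_lt_iff₀ (by linarith)] at h2
  have h4 : -|K| ≤ K := neg_abs_le K
  nlinarith
lemma telescope {f g : Esp → ℝ} {b : Esp → Esp}
    (hf : ∀ x y : Esp, f x + ⟪b x, y - x⟫ ≤ f y)
    (hg : ∀ x y : Esp, g x + ⟪b x, y - x⟫ ≤ g y) (x y : Esp) :
    f x - g x = f y - g y := by
  have h1 := telescope_half hf hg x y
  have h2 := telescope_half hf hg y x
  linarith

end chunk8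
section chunk9
variable {n : ℕ}
local notation "Esp" => EuclideanSpace ℝ (Fin n)

private lemma far_r {r C M s δ l : ℝ} (hδ : 0 < δ) (hM : 0 ≤ M) (hl : 0 < l) (hsδ : δ ≤ s)
    (hll₀ : l ≤ δ/(2*(M + (|r - C|+1)/δ))) : r ≤ C - M*s + s^2/(2*l) := by
  set B : ℝ := (|r - C|+1)/δ with hBdef
  have hB0 : 0 ≤ B := by positivity
  have hB : δ*B = |r - C|+1 := by rw [hBdef]; field_simp
  have hA : (0:ℝ) < 2*(M + B) := by positivity
  have h1 : l*(2*(M + B)) ≤ δ := by rwa [← le_div_iff₀ hA]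
  have h2 : l*(2*(M + B)) ≤ s := h1.trans hsδ
  have h3 : s*(l*(2*(M + B))) ≤ s*s := mul_le_mul_of_nonneg_left h2 (by linarith)
  have h8 : M*s + (r - C) ≤ s^2/(2*l) := by
    rw [le_div_iff₀ (by positivity)]
    nlinarith [h3, hB, le_abs_self (r - C),
      mul_le_mul_of_nonneg_left (mul_le_mul_of_nonneg_right hsδ hB0) (by linarith : (0:ℝ) ≤ 2*l)]
  linarith

lemma env_conv {Θ : Esp → EReal} (hlsc : LowerSemicontinuous Θ) {x : Esp} {C M : ℝ} (hM : 0 ≤ M)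
    (hloc : ∀ z, ((C - M * ‖x - z‖ : ℝ) : EReal) ≤ Θ z) {r : ℝ} (hr : (r : EReal) < Θ x) :
    ∃ l₀ : ℝ, 0 < l₀ ∧ ∀ l : ℝ, 0 < l → l ≤ l₀ → (r : EReal) ≤ env Θ l x := by
  have hev := hlsc x (r : EReal) hr
  rw [Metric.eventually_nhds_iff] at hev
  obtain ⟨δ, hδ, hball⟩ := hev
  refine ⟨δ/(2*(M + (|r - C|+1)/δ)), by positivity, ?_⟩
  intro l hl hll₀
  refine le_iInf fun z => ?_
  by_cases hz : dist z x < δ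
  · have h1 : (r : EReal) ≤ Θ z := (hball hz).le
    have h2 : (0:EReal) ≤ ((‖x - z‖^2/(2*l) : ℝ) : EReal) := by
      rw [← EReal.coe_zero]
      exact EReal.coe_le_coe_iff.2 (by positivity)
    calc (r : EReal) ≤ Θ z := h1
      _ ≤ Θ z + ((‖x - z‖^2/(2*l) : ℝ) : EReal) := le_add_of_nonneg_right h2
  · push_neg at hz
    have hsδ : δ ≤ ‖x - z‖ := by rwa [dist_eq_norm, norm_sub_rev] at hz
    have hreal : r ≤ (C - M*‖x - z‖) + ‖x - z‖^2/(2*l) := by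
      have := far_r hδ hM hl hsδ hll₀
      linarith
    calc (r : EReal) ≤ (((C - M*‖x - z‖) + ‖x - z‖^2/(2*l) : ℝ) : EReal) :=
          EReal.coe_le_coe_iff.2 hreal
      _ = ((C - M*‖x - z‖ : ℝ) : EReal) + ((‖x - z‖^2/(2*l) : ℝ) : EReal) := by
          rw [← EReal.coe_add]
      _ ≤ Θ z + ((‖x - z‖^2/(2*l) : ℝ) : EReal) := add_le_add_left (hloc z) _

end chunk9
section chunk10
variable {n : ℕ}
local notation "Esp" => EuclideanSpace ℝ (Fin n)

lemma env_conv_seq {Θ : Esp → EReal} (hlsc : LowerSemicontinuous Θ) {x : Esp} {C M : ℝ}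
    (hM : 0 ≤ M) (hloc : ∀ z, ((C - M * ‖x - z‖ : ℝ) : EReal) ≤ Θ z) {r : ℝ}
    (hr : (r : EReal) < Θ x) :
    ∃ K : ℕ, ∀ k ≥ K, (r : EReal) ≤ env Θ (((k:ℝ)+1)⁻¹) x := by
  obtain ⟨l₀, hl₀, h⟩ := env_conv hlsc hM hloc hr
  obtain ⟨m, hm⟩ := exists_nat_gt (1/l₀)
  refine ⟨m, fun k hk => ?_⟩
  have hk1 : (0:ℝ) < (k:ℝ)+1 := by positivity
  have hmk : (m:ℝ) ≤ (k:ℝ) := by exact_mod_cast hk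
  have h1 : 1/l₀ < (k:ℝ)+1 := by linarith
  rw [div_lt_iff₀ hl₀] at h1
  have h2 : ((k:ℝ)+1)⁻¹ ≤ l₀ := by
    rw [inv_eq_one_div, div_le_iff₀ hk1]
    nlinarith
  exact h _ (by positivity) h2

-- helper: real form of an EReal inequality with coe summand
lemma toReal_add_le {a b : EReal} {r : ℝ} (hat : a ≠ ⊤) (hab : a ≠ ⊥) (hbt : b ≠ ⊤)
    (h : a + (r : EReal) ≤ b) : a.toReal + r ≤ b.toReal := by
  rw [← EReal.coe_toReal hat hab, ← EReal.coe_add] at h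
  have := EReal.toReal_le_toReal h (EReal.coe_ne_bot _) hbt
  rwa [EReal.toReal_coe] at this

end chunk10
theorem subdiff_inclusion_implies_equal_up_to_constant (n : ℕ)
    (Φ Ψ : EuclideanSpace ℝ (Fin n) → EReal)
    (hΦbot : ∀ y, Φ y ≠ ⊥) (hΦproper : ∃ y, Φ y ≠ ⊤)
    (hΦlsc : LowerSemicontinuous Φ)
    (hΦconv : ∀ y z : EuclideanSpace ℝ (Fin n), ∀ a b : ℝ, 0 ≤ a → 0 ≤ b → a + b = 1 →
      Φ (a • y + b • z) ≤ (a : EReal) * Φ y + (b : EReal) * Φ z)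
    (hΨbot : ∀ y, Ψ y ≠ ⊥) (hΨproper : ∃ y, Ψ y ≠ ⊤)
    (hΨlsc : LowerSemicontinuous Ψ)
    (hΨconv : ∀ y z : EuclideanSpace ℝ (Fin n), ∀ a b : ℝ, 0 ≤ a → 0 ≤ b → a + b = 1 →
      Ψ (a • y + b • z) ≤ (a : EReal) * Ψ y + (b : EReal) * Ψ z)
    (hsub : ∀ y, subdiff n Φ y ⊆ subdiff n Ψ y) :
    ∃ c : ℝ, ∀ y, Φ y = Ψ y + (c : EReal) := by
  classical
  obtain ⟨LΦ, βΦ, hminΦ⟩ := exists_minorant hΦbot hΦproper hΦlsc hΦconv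
  obtain ⟨z₀, hz₀⟩ := hΦproper
  -- local minorants for Φ
  have hlocΦ : ∀ x z : EuclideanSpace ℝ (Fin n),
      (((LΦ x + βΦ) - ‖LΦ‖ * ‖x - z‖ : ℝ) : EReal) ≤ Φ z := by
    intro x z
    refine le_trans (EReal.coe_le_coe_iff.2 ?_) (hminΦ z)
    have h1 : LΦ z - LΦ x = LΦ (z - x) := by rw [map_sub]
    have h2 : |LΦ (z - x)| ≤ ‖LΦ‖ * ‖z - x‖ := by
      have := LΦ.le_opNorm (z - x)
      rwa [Real.norm_eq_abs] at this
    have h3 : -(‖LΦ‖ * ‖z - x‖) ≤ LΦ (z - x) := neg_le_of_abs_le h2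
    rw [norm_sub_rev z x] at h3
    linarith [h3, h1.symm.le]
  -- prox points
  have hex : ∀ (k : ℕ) (x : EuclideanSpace ℝ (Fin n)),
      ∃ p : EuclideanSpace ℝ (Fin n), Φ p ≠ ⊤ ∧ ∀ z : EuclideanSpace ℝ (Fin n),
        Φ p + ((‖x - p‖^2/(2*((k:ℝ)+1)⁻¹) : ℝ) : EReal)
          ≤ Φ z + ((‖x - z‖^2/(2*((k:ℝ)+1)⁻¹) : ℝ) : EReal) := by
    intro k x
    exact exists_prox hΦbot hΦlsc hz₀ (norm_nonneg LΦ) (by positivity) (hlocΦ x)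
  choose P hPtop hPmin using hex
  set lk : ℕ → ℝ := fun k => ((k:ℝ)+1)⁻¹ with hlk
  have hlkpos : ∀ k, 0 < lk k := fun k => by positivity
  set b : ℕ → EuclideanSpace ℝ (Fin n) → EuclideanSpace ℝ (Fin n) :=
    fun k x => (lk k)⁻¹ • (x - P k x) with hb
  have hbΦ : ∀ k x, b k x ∈ subdiff n Φ (P k x) := fun k x =>
    prox_subdiff hΦbot hΦconv (hlkpos k) (hPtop k x) (hPmin k x)
  have hbΨ : ∀ k x, b k x ∈ subdiff n Ψ (P k x) := fun k x => hsub _ (hbΦ k x)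
  obtain ⟨y₀, hy₀⟩ := hΨproper
  have hΨPtop : ∀ k x, Ψ (P k x) ≠ ⊤ := by
    intro k x h
    have := hbΨ k x y₀
    rw [h, EReal.top_add_coe, top_le_iff] at this
    exact hy₀ this
  -- base point
  set w : EuclideanSpace ℝ (Fin n) := P 0 0 with hw
  set b₀ : EuclideanSpace ℝ (Fin n) := b 0 0 with hb₀
  have hbΨw : b₀ ∈ subdiff n Ψ w := hbΨ 0 0
  have hΨw : Ψ w ≠ ⊤ := hΨPtop 0 0
  have hΦw : Φ w ≠ ⊤ := hPtop 0 0
  -- local minorants for Ψ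
  have hlocΨ : ∀ x z : EuclideanSpace ℝ (Fin n),
      ((((Ψ w).toReal + ⟪b₀, x - w⟫) - ‖b₀‖ * ‖x - z‖ : ℝ) : EReal) ≤ Ψ z := by
    intro x z
    by_cases hz : Ψ z = ⊤
    · rw [hz]; exact le_top
    have h1 := subdiff_real hbΨw hΨw (hΨbot w) hz (hΨbot z)
    rw [← EReal.coe_toReal hz (hΨbot z)]
    refine EReal.coe_le_coe_iff.2 ?_
    have h2 : ⟪b₀, z - w⟫ - ⟪b₀, x - w⟫ = ⟪b₀, z - x⟫ := by
      rw [← inner_sub_right]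
      congr 1
      abel
    have h3 : -(‖b₀‖ * ‖z - x‖) ≤ ⟪b₀, z - x⟫ :=
      neg_le_of_abs_le (abs_real_inner_le_norm _ _)
    rw [norm_sub_rev z x] at h3
    linarith
  -- envelopes are finite
  have hfinΦ : ∀ k x, env Φ (lk k) x ≠ ⊥ ∧ env Φ (lk k) x ≠ ⊤ := by
    intro k x
    constructor
    · exact (lt_of_lt_of_le (EReal.bot_lt_coe _) (env_lower (hlkpos k) (hlocΦ x))).ne'
    · exact env_ne_top hΦbot hz₀ x
  have hfinΨ : ∀ k x, env Ψ (lk k) x ≠ ⊥ ∧ env Ψ (lk k) x ≠ ⊤ := by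
    intro k x
    constructor
    · exact (lt_of_lt_of_le (EReal.bot_lt_coe _) (env_lower (hlkpos k) (hlocΨ x))).ne'
    · exact env_ne_top hΨbot hΨw x
  -- real-valued envelopes
  set F : ℕ → EuclideanSpace ℝ (Fin n) → ℝ := fun k x => (env Φ (lk k) x).toReal with hF
  set G : ℕ → EuclideanSpace ℝ (Fin n) → ℝ := fun k x => (env Ψ (lk k) x).toReal with hG
  have hFsub : ∀ (k : ℕ) (x y : EuclideanSpace ℝ (Fin n)), F k x + ⟪b k x, y - x⟫ ≤ F k y := by
    intro k x y
    have h := env_subgrad hΦbot (hlkpos k) (hPtop k x) (hbΦ k x) y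
    exact toReal_add_le (hfinΦ k x).2 (hfinΦ k x).1 (hfinΦ k y).2 h
  have hGsub : ∀ (k : ℕ) (x y : EuclideanSpace ℝ (Fin n)), G k x + ⟪b k x, y - x⟫ ≤ G k y := by
    intro k x y
    have h := env_subgrad hΨbot (hlkpos k) (hΨPtop k x) (hbΨ k x) y
    exact toReal_add_le (hfinΨ k x).2 (hfinΨ k x).1 (hfinΨ k y).2 h
  have htel : ∀ (k : ℕ) (x : EuclideanSpace ℝ (Fin n)), F k x - G k x = F k w - G k w :=
    fun k x => telescope (hFsub k) (hGsub k) x w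
  -- sequence convergence helpers
  have hFseq : ∀ (x : EuclideanSpace ℝ (Fin n)) (r : ℝ), (r : EReal) < Φ x →
      ∃ K, ∀ k ≥ K, r ≤ F k x := by
    intro x r hr
    obtain ⟨K, hK⟩ := env_conv_seq hΦlsc (norm_nonneg LΦ) (hlocΦ x) hr
    refine ⟨K, fun k hk => ?_⟩
    have h := hK k hk
    have h2 := EReal.toReal_le_toReal h (EReal.coe_ne_bot _) (hfinΦ k x).2
    rwa [EReal.toReal_coe] at h2
  have hGseq : ∀ (x : EuclideanSpace ℝ (Fin n)) (r : ℝ), (r : EReal) < Ψ x →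
      ∃ K, ∀ k ≥ K, r ≤ G k x := by
    intro x r hr
    obtain ⟨K, hK⟩ := env_conv_seq hΨlsc (norm_nonneg b₀) (hlocΨ x) hr
    refine ⟨K, fun k hk => ?_⟩
    have h := hK k hk
    have h2 := EReal.toReal_le_toReal h (EReal.coe_ne_bot _) (hfinΨ k x).2
    rwa [EReal.toReal_coe] at h2
  have hFle : ∀ (k : ℕ) (y : EuclideanSpace ℝ (Fin n)), Φ y ≠ ⊤ → F k y ≤ (Φ y).toReal :=
    fun k y hy => EReal.toReal_le_toReal (env_le_self Φ (hlkpos k) y) (hfinΦ k y).1 hy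
  have hGle : ∀ (k : ℕ) (y : EuclideanSpace ℝ (Fin n)), Ψ y ≠ ⊤ → G k y ≤ (Ψ y).toReal :=
    fun k y hy => EReal.toReal_le_toReal (env_le_self Ψ (hlkpos k) y) (hfinΨ k y).1 hy
  set c : ℝ := (Φ w).toReal - (Ψ w).toReal with hc
  have hck_ub : ∀ ε : ℝ, 0 < ε → ∃ K, ∀ k ≥ K, F k w - G k w ≤ c + ε := by
    intro ε hε
    have hs : (((Ψ w).toReal - ε : ℝ) : EReal) < Ψ w := by
      conv_rhs => rw [← EReal.coe_toReal hΨw (hΨbot w)]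
      exact EReal.coe_lt_coe_iff.2 (by linarith)
    obtain ⟨K, hK⟩ := hGseq w _ hs
    exact ⟨K, fun k hk => by have h1 := hK k hk; have h2 := hFle k w hΦw; rw [hc]; linarith⟩
  have hck_lb : ∀ ε : ℝ, 0 < ε → ∃ K, ∀ k ≥ K, c - ε ≤ F k w - G k w := by
    intro ε hε
    have hs : (((Φ w).toReal - ε : ℝ) : EReal) < Φ w := by
      conv_rhs => rw [← EReal.coe_toReal hΦw (hΦbot w)]
      exact EReal.coe_lt_coe_iff.2 (by linarith)
    obtain ⟨K, hK⟩ := hFseq w _ hs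
    exact ⟨K, fun k hk => by have h1 := hK k hk; have h2 := hGle k w hΨw; rw [hc]; linarith⟩
  refine ⟨c, fun y => le_antisymm ?_ ?_⟩
  · -- Φ y ≤ Ψ y + c
    by_cases hΨy : Ψ y = ⊤
    · rw [hΨy]
      have htop : (⊤ : EReal) + (c : EReal) = ⊤ := EReal.top_add_coe c
      rw [htop]
      exact le_top
    have hre : Ψ y + (c : EReal) = (((Ψ y).toReal + c : ℝ) : EReal) := by
      conv_lhs => rw [← EReal.coe_toReal hΨy (hΨbot y)]
      rw [← EReal.coe_add]
    rw [hre]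
    apply le_coe_of_forall_lt'
    intro r hr
    refine le_of_forall_pos_le_add ?_
    intro ε hε
    obtain ⟨K1, hK1⟩ := hFseq y r hr
    obtain ⟨K2, hK2⟩ := hck_ub ε hε
    set k := max K1 K2 with hkdef
    have h1 : r ≤ F k y := hK1 k (le_max_left _ _)
    have h2 := htel k y
    have h3 : G k y ≤ (Ψ y).toReal := hGle k y hΨy
    have h4 := hK2 k (le_max_right _ _)
    linarith
  · -- Ψ y + c ≤ Φ y
    by_cases hΦy : Φ y = ⊤
    · rw [hΦy]; exact le_top
    have claim : ∀ s : ℝ, (s : EReal) < Ψ y → ∀ ε : ℝ, 0 < ε → s + c - ε ≤ (Φ y).toReal := by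
      intro s hs ε hε
      obtain ⟨K1, hK1⟩ := hGseq y s hs
      obtain ⟨K2, hK2⟩ := hck_lb ε hε
      set k := max K1 K2 with hkdef
      have h1 : s ≤ G k y := hK1 k (le_max_left _ _)
      have h2 : F k y ≤ (Φ y).toReal := hFle k y hΦy
      have h3 := htel k y
      have h4 := hK2 k (le_max_right _ _)
      linarith
    have hΨytop : Ψ y ≠ ⊤ := by
      intro h
      have := claim ((Φ y).toReal - c + 2) (by rw [h]; exact EReal.coe_lt_top _) 1 one_pos
      linarith
    have hre : Ψ y + (c : EReal) = (((Ψ y).toReal + c : ℝ) : EReal) := by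
      conv_lhs => rw [← EReal.coe_toReal hΨytop (hΨbot y)]
      rw [← EReal.coe_add]
    have hrePhi : Φ y = (((Φ y).toReal : ℝ) : EReal) := (EReal.coe_toReal hΦy (hΦbot y)).symm
    rw [hre, hrePhi, EReal.coe_le_coe_iff]
    refine le_of_forall_pos_le_add ?_
    intro ε hε
    have hs : ((((Ψ y).toReal - ε/2 : ℝ)) : EReal) < Ψ y := by
      conv_rhs => rw [← EReal.coe_toReal hΨytop (hΨbot y)]
      exact EReal.coe_lt_coe_iff.2 (by linarith)
    have := claim _ hs (ε/2) (by linarith)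
    linarith
end

section
/- The function g : M×M×ℝ → [0,∞] (M = real 3×3 matrices) defined by g(A,H,δ) = |A|²/δ if δ > 0, g(0,0,0) = 0, and g = +∞ otherwise, is convex; consequently ψ(A) = |A|²/det A is polyconvex, i.e., ψ(A) = g(A, cof A, det A) for all A with det A > 0. -/
open scoped ENNReal

noncomputable def frob (A : Matrix (Fin 3) (Fin 3) ℝ) : ℝ :=
  Real.sqrt (∑ i : Fin 3, ∑ j : Fin 3, (A i j) ^ 2)

lemma frob_sq (A : Matrix (Fin 3) (Fin 3) ℝ) :
    frob A ^ 2 = ∑ i : Fin 3, ∑ j : Fin 3, (A i j) ^ 2 :=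
  Real.sq_sqrt (by positivity)

lemma frob_smul_sq (c : ℝ) (A : Matrix (Fin 3) (Fin 3) ℝ) :
    frob (c • A) ^ 2 = c ^ 2 * frob A ^ 2 := by
  simp [frob_sq, Matrix.smul_apply, smul_eq_mul, mul_pow, Finset.mul_sum]

lemma ptwise (x y s t a b : ℝ) (hs : 0 < s) (ht : 0 < t) (ha : 0 < a) (hb : 0 < b) :
    (a * x + b * y) ^ 2 / (a * s + b * t) ≤ a * (x ^ 2 / s) + b * (y ^ 2 / t) := by
  rw [div_le_iff₀ (by positivity)]
  have h1 : a * (x ^ 2 / s) = a * x ^ 2 / s := by ring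
  have h2 : b * (y ^ 2 / t) = b * y ^ 2 / t := by ring
  rw [h1, h2, div_add_div _ _ hs.ne' ht.ne']
  rw [div_mul_eq_mul_div, le_div_iff₀ (by positivity)]
  nlinarith [mul_nonneg (mul_pos ha hb).le (sq_nonneg (x * t - y * s)), mul_pos hs ht]

lemma key (A B : Matrix (Fin 3) (Fin 3) ℝ) (s t a b : ℝ)
    (hs : 0 < s) (ht : 0 < t) (ha : 0 < a) (hb : 0 < b) :
    frob (a • A + b • B) ^ 2 / (a * s + b * t)
      ≤ a * (frob A ^ 2 / s) + b * (frob B ^ 2 / t) := by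
  simp only [frob_sq, Finset.sum_div, ← Finset.sum_add_distrib, Finset.mul_sum]
  refine Finset.sum_le_sum fun i _ => Finset.sum_le_sum fun j _ => ?_
  simpa [Matrix.add_apply, Matrix.smul_apply, smul_eq_mul] using
    ptwise (A i j) (B i j) s t a b hs ht ha hb

open Classical in
noncomputable def gPoly
    (p : Matrix (Fin 3) (Fin 3) ℝ × Matrix (Fin 3) (Fin 3) ℝ × ℝ) : ℝ≥0∞ :=
  if 0 < p.2.2 then ENNReal.ofReal (frob p.1 ^ 2 / p.2.2)
  else if p.1 = 0 ∧ p.2.1 = 0 ∧ p.2.2 = 0 then 0 else ⊤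

theorem gPoly_convex_and_polyconvex :
    (∀ p q : Matrix (Fin 3) (Fin 3) ℝ × Matrix (Fin 3) (Fin 3) ℝ × ℝ,
      ∀ a b : ℝ, 0 ≤ a → 0 ≤ b → a + b = 1 →
        gPoly (a • p + b • q) ≤ ENNReal.ofReal a * gPoly p + ENNReal.ofReal b * gPoly q)
    ∧ (∀ A : Matrix (Fin 3) (Fin 3) ℝ, 0 < A.det →
        gPoly (A, Matrix.transpose (Matrix.adjugate A), A.det) = ENNReal.ofReal (frob A ^ 2 / A.det)) := by
  constructor
  · intro p q a b ha hb hab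
    rcases ha.lt_or_eq with ha' | ha'
    swap
    · have hb1 : b = 1 := by linarith
      subst hb1; rw [← ha']; simp
    rcases hb.lt_or_eq with hb' | hb'
    swap
    · have ha1 : a = 1 := by linarith
      subst ha1; rw [← hb']; simp
    -- now 0 < a, 0 < b
    have hfst : (a • p + b • q).1 = a • p.1 + b • q.1 := rfl
    have hsnd1 : (a • p + b • q).2.1 = a • p.2.1 + b • q.2.1 := rfl
    have hsnd2 : (a • p + b • q).2.2 = a * p.2.2 + b * q.2.2 := rfl
    by_cases hp : 0 < p.2.2
    · by_cases hq : 0 < q.2.2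
      · have hpos : 0 < (a • p + b • q).2.2 := by
          rw [hsnd2]; positivity
        calc gPoly (a • p + b • q)
            = ENNReal.ofReal (frob (a • p.1 + b • q.1) ^ 2 / (a * p.2.2 + b * q.2.2)) := by
              rw [gPoly, if_pos hpos, hfst, hsnd2]
          _ ≤ ENNReal.ofReal (a * (frob p.1 ^ 2 / p.2.2) + b * (frob q.1 ^ 2 / q.2.2)) :=
              ENNReal.ofReal_le_ofReal (key _ _ _ _ _ _ hp hq ha' hb')
          _ = ENNReal.ofReal a * ENNReal.ofReal (frob p.1 ^ 2 / p.2.2)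
              + ENNReal.ofReal b * ENNReal.ofReal (frob q.1 ^ 2 / q.2.2) := by
              rw [ENNReal.ofReal_add (by positivity) (by positivity),
                ENNReal.ofReal_mul ha, ENNReal.ofReal_mul hb]
          _ = ENNReal.ofReal a * gPoly p + ENNReal.ofReal b * gPoly q := by
              rw [gPoly, if_pos hp, gPoly, if_pos hq]
      · by_cases hq0 : q.1 = 0 ∧ q.2.1 = 0 ∧ q.2.2 = 0
        · have hpos : 0 < (a • p + b • q).2.2 := by
            rw [hsnd2, hq0.2.2]; simpa using mul_pos ha' hp
          have hcomb : frob (a • p.1 + b • q.1) ^ 2 / (a * p.2.2 + b * q.2.2)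
              = a * (frob p.1 ^ 2 / p.2.2) := by
            rw [hq0.1, hq0.2.2]
            rw [smul_zero, add_zero, mul_zero, add_zero, frob_smul_sq]
            field_simp
          calc gPoly (a • p + b • q)
              = ENNReal.ofReal (a * (frob p.1 ^ 2 / p.2.2)) := by
                rw [gPoly, if_pos hpos, hfst, hsnd2, hcomb]
            _ = ENNReal.ofReal a * gPoly p := by
                rw [ENNReal.ofReal_mul ha, gPoly, if_pos hp]
            _ ≤ _ := le_self_add
        · have : gPoly q = ⊤ := by rw [gPoly, if_neg hq, if_neg hq0]
          rw [this, ENNReal.mul_top (by simp [ENNReal.ofReal_eq_zero]; linarith)]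
          simp
    · by_cases hp0 : p.1 = 0 ∧ p.2.1 = 0 ∧ p.2.2 = 0
      · by_cases hq : 0 < q.2.2
        · have hpos : 0 < (a • p + b • q).2.2 := by
            rw [hsnd2, hp0.2.2]; simpa using mul_pos hb' hq
          have hcomb : frob (a • p.1 + b • q.1) ^ 2 / (a * p.2.2 + b * q.2.2)
              = b * (frob q.1 ^ 2 / q.2.2) := by
            rw [hp0.1, hp0.2.2]
            rw [smul_zero, zero_add, mul_zero, zero_add, frob_smul_sq]
            field_simp
          calc gPoly (a • p + b • q)
              = ENNReal.ofReal (b * (frob q.1 ^ 2 / q.2.2)) := by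
                rw [gPoly, if_pos hpos, hfst, hsnd2, hcomb]
            _ = ENNReal.ofReal b * gPoly q := by
                rw [ENNReal.ofReal_mul hb, gPoly, if_pos hq]
            _ ≤ _ := le_add_self
        · by_cases hq0 : q.1 = 0 ∧ q.2.1 = 0 ∧ q.2.2 = 0
          · have h1 : (a • p + b • q).1 = 0 := by
              rw [hfst, hp0.1, hq0.1, smul_zero, smul_zero, add_zero]
            have h2 : (a • p + b • q).2.1 = 0 := by
              rw [hsnd1, hp0.2.1, hq0.2.1, smul_zero, smul_zero, add_zero]
            have h3 : (a • p + b • q).2.2 = 0 := by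
              rw [hsnd2, hp0.2.2, hq0.2.2, mul_zero, mul_zero, add_zero]
            have : gPoly (a • p + b • q) = 0 := by
              rw [gPoly, if_neg (by rw [h3]; exact lt_irrefl 0), if_pos ⟨h1, h2, h3⟩]
            rw [this]; exact zero_le
          · have : gPoly q = ⊤ := by rw [gPoly, if_neg hq, if_neg hq0]
            rw [this, ENNReal.mul_top (by simp [ENNReal.ofReal_eq_zero]; linarith)]
            simp
      · have : gPoly p = ⊤ := by rw [gPoly, if_neg hp, if_neg hp0]
        rw [this, ENNReal.mul_top (by simp [ENNReal.ofReal_eq_zero]; linarith)]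
        simp
  · intro A hA
    rw [gPoly, if_pos hA]
end

section
/- Let g̃ : M×M×[0,∞) → [0,∞] (M = real 3×3 matrices) be convex and satisfy g̃(RA,RH,δ) = g̃(A,H,δ) for all R ∈ SO(3), A,H ∈ M, δ ≥ 0. Then g̃(0,0,0) ≤ g̃(A,H,0) for all A,H ∈ M; in particular, if g̃(0,0,0) = +∞ then g̃(A,H,0) = +∞ for all A,H. -/
/-!
Averaging a point with its image under a rotation `R` does not increase `g`, by convexity and
rotation invariance; this replaces `(A, H)` by `(P A, P H)` with `P = (1 + R) / 2`. For the
rotations by `π` about the first two coordinate axes, the two averaging operators multiply to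
zero, so two such steps carry any `(A, H, 0)` to `(0, 0, 0)`.
-/

open scoped ENNReal
open Matrix

theorem apply_half_one_add_mul_le {n : Type*} [Fintype n] [DecidableEq n]
    (g : Matrix n n ℝ × Matrix n n ℝ × ℝ → ℝ≥0∞)
    (hmid : ∀ p q : Matrix n n ℝ × Matrix n n ℝ × ℝ, 0 ≤ p.2.2 → 0 ≤ q.2.2 →
      g ((1 / 2 : ℝ) • p + (1 / 2 : ℝ) • q) ≤
        ENNReal.ofReal (1 / 2) * g p + ENNReal.ofReal (1 / 2) * g q)
    {R : Matrix n n ℝ} (hR : ∀ A H, g (R * A, R * H, 0) = g (A, H, 0)) (A H : Matrix n n ℝ) :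
    g ((1 / 2 : ℝ) • (1 + R) * A, (1 / 2 : ℝ) • (1 + R) * H, 0) ≤ g (A, H, 0) := by
  have hsum : ((1 / 2 : ℝ) • (1 + R) * A, (1 / 2 : ℝ) • (1 + R) * H, (0 : ℝ)) =
      (1 / 2 : ℝ) • (A, H, (0 : ℝ)) + (1 / 2 : ℝ) • (R * A, R * H, (0 : ℝ)) := by
    simp [add_mul, smul_add]
  calc g ((1 / 2 : ℝ) • (1 + R) * A, (1 / 2 : ℝ) • (1 + R) * H, 0)
      ≤ ENNReal.ofReal (1 / 2) * g (A, H, 0) + ENNReal.ofReal (1 / 2) * g (R * A, R * H, 0) :=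
        hsum ▸ hmid _ _ le_rfl le_rfl
    _ = g (A, H, 0) := by
        rw [hR, ENNReal.ofReal_div_of_pos two_pos, ENNReal.ofReal_one, ENNReal.ofReal_ofNat,
          ← add_mul, ENNReal.add_halves, one_mul]

theorem diagonal_mul_transpose_self_eq_one {n α : Type*} [Fintype n] [DecidableEq n]
    [Semiring α] {d : n → α} (hd : ∀ i, d i * d i = 1) :
    diagonal d * (diagonal d)ᵀ = 1 := by
  rw [diagonal_transpose, diagonal_mul_diagonal, ← diagonal_one]
  exact congrArg diagonal (funext hd)

def rotX : Matrix (Fin 3) (Fin 3) ℝ := diagonal ![1, -1, -1]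

def rotY : Matrix (Fin 3) (Fin 3) ℝ := diagonal ![-1, 1, -1]

theorem rotX_mul_transpose : rotX * rotXᵀ = 1 :=
  diagonal_mul_transpose_self_eq_one (fun i => by fin_cases i <;> norm_num)

theorem det_rotX : rotX.det = 1 := by
  simp [rotX, det_diagonal, Fin.prod_univ_three]

theorem rotY_mul_transpose : rotY * rotYᵀ = 1 :=
  diagonal_mul_transpose_self_eq_one (fun i => by fin_cases i <;> norm_num)

theorem det_rotY : rotY.det = 1 := by
  simp [rotY, det_diagonal, Fin.prod_univ_three]

theorem half_one_add_rotY_mul_half_one_add_rotX :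
    (1 / 2 : ℝ) • (1 + rotY) * ((1 / 2 : ℝ) • (1 + rotX)) = 0 := by
  rw [rotX, rotY, ← diagonal_one, diagonal_add, diagonal_add, ← diagonal_smul,
    ← diagonal_smul, diagonal_mul_diagonal, ← diagonal_zero]
  congr 1
  ext i
  fin_cases i <;> norm_num

theorem invariant_convex_min_at_zero
    (g : Matrix (Fin 3) (Fin 3) ℝ × Matrix (Fin 3) (Fin 3) ℝ × ℝ → ℝ≥0∞)
    (hconv : ∀ p q : Matrix (Fin 3) (Fin 3) ℝ × Matrix (Fin 3) (Fin 3) ℝ × ℝ,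
      0 ≤ p.2.2 → 0 ≤ q.2.2 → ∀ a b : ℝ, 0 ≤ a → 0 ≤ b → a + b = 1 →
        g (a • p + b • q) ≤ ENNReal.ofReal a * g p + ENNReal.ofReal b * g q)
    (hinv : ∀ R : Matrix (Fin 3) (Fin 3) ℝ, R * Matrix.transpose R = 1 → R.det = 1 →
      ∀ A H : Matrix (Fin 3) (Fin 3) ℝ, ∀ δ : ℝ, 0 ≤ δ → g (R * A, R * H, δ) = g (A, H, δ)) :
    (∀ A H : Matrix (Fin 3) (Fin 3) ℝ, g (0, 0, 0) ≤ g (A, H, 0))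
    ∧ (g (0, 0, 0) = ⊤ → ∀ A H : Matrix (Fin 3) (Fin 3) ℝ, g (A, H, 0) = ⊤) := by
  have hmid : ∀ p q : Matrix (Fin 3) (Fin 3) ℝ × Matrix (Fin 3) (Fin 3) ℝ × ℝ,
      0 ≤ p.2.2 → 0 ≤ q.2.2 → g ((1 / 2 : ℝ) • p + (1 / 2 : ℝ) • q) ≤
        ENNReal.ofReal (1 / 2) * g p + ENNReal.ofReal (1 / 2) * g q :=
    fun p q hp hq => hconv p q hp hq _ _ (by norm_num) (by norm_num) (by norm_num)
  have hX := apply_half_one_add_mul_le g hmid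
    fun A H => hinv _ rotX_mul_transpose det_rotX A H 0 le_rfl
  have hY := apply_half_one_add_mul_le g hmid
    fun A H => hinv _ rotY_mul_transpose det_rotY A H 0 le_rfl
  have hmin : ∀ A H : Matrix (Fin 3) (Fin 3) ℝ, g (0, 0, 0) ≤ g (A, H, 0) := fun A H =>
    calc g (0, 0, 0)
        = g ((1 / 2 : ℝ) • (1 + rotY) * ((1 / 2 : ℝ) • (1 + rotX) * A),
            (1 / 2 : ℝ) • (1 + rotY) * ((1 / 2 : ℝ) • (1 + rotX) * H), 0) := by
          rw [← mul_assoc, ← mul_assoc, half_one_add_rotY_mul_half_one_add_rotX, zero_mul,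
            zero_mul]
      _ ≤ g ((1 / 2 : ℝ) • (1 + rotX) * A, (1 / 2 : ℝ) • (1 + rotX) * H, 0) := hY _ _
      _ ≤ g (A, H, 0) := hX A H
  exact ⟨hmin, fun htop A H => top_le_iff.mp (htop ▸ hmin A H)⟩
end
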